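/- arXiv:1305.5799 — 2 statements merged into one kernel-verified Lean document; each statement's English description precedes it below -/
import Mathlib

section
/- Let λ, b ∈ ℂ with |λ| ≤ 1, and suppose that the cubic polynomial f_{λ,b} is potentially renormalizable. Then f_{λ,b} has two distinct critical points; equivalently, b² ≠ 3λ. -/
open Filter Topology Polynomial Bornology

noncomputable section

/-- The cubic polynomial map `f_{λ,b}(z) = λ z + b z² + z³`. -/
def cf (l b : ℂ) : ℂ → ℂ := fun z => l * z + b * z ^ 2 + z ^ 3

/-- `f_{λ,b}` as a formal polynomial. -/
def cpoly (l b : ℂ) : Polynomial ℂ := C l * X + C b * X ^ 2 + X ^ 3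

/-- `c` is a critical point of `f_{λ,b}`, i.e. a root of `λ + 2 b z + 3 z²`. -/
def IsCrit (l b c : ℂ) : Prop := l + 2 * b * c + 3 * c ^ 2 = 0

/-- The basin of attraction of `p` for `f_{λ,b}`. -/
def basin (l b p : ℂ) : Set ℂ := {z | Tendsto (fun n => (cf l b)^[n] z) atTop (𝓝 p)}

/-- `(λ, b)` is PHD: `f_{λ,b}` has an attracting fixed point whose immediate basin
contains all critical points. -/
def PHD (l b : ℂ) : Prop :=
  ∃ p : ℂ, cf l b p = p ∧ ‖l + 2 * b * p + 3 * p ^ 2‖ < 1 ∧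
    ∀ c : ℂ, IsCrit l b c → c ∈ connectedComponentIn (basin l b p) p

/-- The closure of `{(μ, β²) : (μ, β) is PHD}`. -/
def PP : Set (ℂ × ℂ) := closure {q | ∃ l b : ℂ, PHD l b ∧ q = (l, b ^ 2)}

/-- `f_{λ,b}` is potentially renormalizable. -/
def PotRenorm (l b : ℂ) : Prop := (l, b ^ 2) ∉ PP

/-- The immediate basin of `0` for `f_{λ,b}`. -/
def immBasin (l b : ℂ) : Set ℂ := connectedComponentIn (basin l b 0) 0

/-- `c` is a principal critical point of `f_{λ,b}`. -/
def IsPrincipal (l b c : ℂ) : Prop :=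
  ∃ U : Set (ℂ × ℂ), IsOpen U ∧ (l, b) ∈ U ∧
    ∃ ω : ℂ × ℂ → ℂ, DifferentiableOn ℂ ω U ∧ ω (l, b) = c ∧
      ∀ p ∈ U, ‖p.1‖ < 1 →
        IsCrit p.1 p.2 (ω p) ∧ ω p ∈ immBasin p.1 p.2

/-- `z ∈ Z(f_{λ,b})`. -/
def Zmem (l b z : ℂ) : Prop :=
  ∃ U : Set (ℂ × ℂ), IsOpen U ∧ Convex ℝ U ∧ (l, b) ∈ U ∧
    ∃ ζ ω : ℂ × ℂ → ℂ, DifferentiableOn ℂ ζ U ∧ DifferentiableOn ℂ ω U ∧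
      ζ (l, b) = z ∧
      (∀ p ∈ U, ‖p.1‖ < 1 →
        IsCrit p.1 p.2 (ω p) ∧ ω p ∈ immBasin p.1 p.2) ∧
      (∃ n : ℕ, ∀ p ∈ U, (cf p.1 p.2)^[n] (ζ p) = ω p) ∧
      (∀ p ∈ U, ‖p.1‖ < 1 → ζ p ∈ immBasin p.1 p.2)

/-- `Z_n(f)`, relative to the principal critical point `c` of `f_{λ,b}`. -/
def Zn (l b c : ℂ) (n : ℕ) : Set ℂ := {z | Zmem l b z ∧ (cf l b)^[n] z = c}

/-- `X(f) = ⋂_{m ≥ 0} closure (⋃_{n ≥ m} Z_n(f))`,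
relative to the principal critical point `c` of `f_{λ,b}`. -/
def Xset (l b c : ℂ) : Set ℂ := ⋂ m : ℕ, closure (⋃ n ∈ Set.Ici m, Zn l b c n)

open Classical in
/-- `ν_T(z)`: the number of preimages of `z` under `P` lying in `T`,
counted with multiplicities. -/
def nuT (P : Polynomial ℂ) (T : Set ℂ) (z : ℂ) : ℕ :=
  Multiset.card (Multiset.filter (· ∈ T) (P - C z).roots)

/-- The multiplicity of `P` at `x`: the order of vanishing of `w ↦ P(w) - P(x)` at `x`. -/
def multP (P : Polynomial ℂ) (x : ℂ) : ℕ := rootMultiplicity x (P - C (P.eval x))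

/-- The topological hull: `T` together with all bounded components of its complement. -/
def thu (T : Set ℂ) : Set ℂ :=
  T ∪ {z | z ∉ T ∧ IsBounded (connectedComponentIn Tᶜ z)}

/-- The filled Julia set of `g`. -/
def filledJulia (g : ℂ → ℂ) : Set ℂ := {z | IsBounded (Set.range fun n => g^[n] z)}

/-- The Julia set of `g`. -/
def julia (g : ℂ → ℂ) : Set ℂ := frontier (filledJulia g)

/-- `P : U → V` is a polynomial-like map of degree `k`. -/
def PolyLike (P : Polynomial ℂ) (k : ℕ) (U V : Set ℂ) : Prop :=
  IsOpen U ∧ IsOpen V ∧ IsBounded U ∧ IsBounded V ∧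
  IsConnected U ∧ IsConnected V ∧
  SimplyConnectedSpace U ∧ SimplyConnectedSpace V ∧
  closure U ⊆ V ∧
  (∃ u ∈ U, U = connectedComponentIn ((fun w => P.eval w) ⁻¹' V) u) ∧
  (∀ v ∈ V, nuT P U v = k)

/-- The filled (polynomial-like) Julia set: points all of whose iterates stay in `U`. -/
def fillSet (g : ℂ → ℂ) (U : Set ℂ) : Set ℂ := {z | ∀ n : ℕ, g^[n] z ∈ U}

/-- `f_{λ,b}` is immediately renormalizable. -/
def ImmRenorm (l b : ℂ) : Prop :=
  ∃ U V : Set ℂ, (0 : ℂ) ∈ U ∧ PolyLike (cpoly l b) 2 U V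

/-- The set of points attracted to `y` under `g`. -/
def attractsTo (g : ℂ → ℂ) (y : ℂ) : Set ℂ :=
  {z | Tendsto (fun n => g^[n] z) atTop (𝓝 y)}

/-- Points attracted to `y` under `g` whose orbit avoids `y`. -/
def parabSet (g : ℂ → ℂ) (y : ℂ) : Set ℂ :=
  {z | Tendsto (fun n => g^[n] z) atTop (𝓝 y) ∧ ∀ n : ℕ, g^[n] z ≠ y}

/-- For every attracting or parabolic periodic point `y ∈ Y`, the immediate basin of `y`
(resp. every parabolic domain at `y`) is contained in `Y`. -/
def BasinCond (g : ℂ → ℂ) (Y : Set ℂ) : Prop :=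
  ∀ y ∈ Y, ∀ r : ℕ, 1 ≤ r → g^[r] y = y →
    (‖deriv (g^[r]) y‖ < 1 →
      connectedComponentIn (attractsTo (g^[r]) y) y ⊆ Y) ∧
    ((∃ q : ℕ, 1 ≤ q ∧ (deriv (g^[r]) y) ^ q = 1) →
      ∀ z ∈ parabSet (g^[r]) y,
        y ∈ closure (connectedComponentIn (parabSet (g^[r]) y) z) →
        connectedComponentIn (parabSet (g^[r]) y) z ⊆ Y)

open Classical in
/-- `m = 1 + Σ_{c ∈ T critical} (d_c - 1)`. -/
def critWeight (P : Polynomial ℂ) (T : Set ℂ) : ℕ :=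
  1 + ∑ c ∈ Finset.filter (· ∈ T) (derivative P).roots.toFinset, (multP P c - 1)

end

namespace PRaux

open Metric Set Filter

/-! ### Generalities: primitives, logarithms and cube roots on a disk -/

lemma exists_primitive {R : ℝ} {G : ℂ → ℂ} (hG : DifferentiableOn ℂ G (ball (0:ℂ) R)) :
    ∃ P : ℂ → ℂ, ∀ z ∈ ball (0:ℂ) R, HasDerivAt P (G z) z := by
  classical
  refine ⟨fun z => ∑' n : ℕ, ((n : ℂ) + 1)⁻¹ * ((n.factorial : ℂ)⁻¹ * iteratedDeriv n G 0) * z ^ (n + 1),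
    ?_⟩
  intro z₁ hz₁
  have hz₁' : ‖z₁‖ < R := by simpa [mem_ball_zero_iff] using hz₁
  obtain ⟨r', hr'1, hr'2⟩ := exists_between hz₁'
  obtain ⟨r'', hr''1, hr''2⟩ := exists_between hr'2
  have hr'pos : 0 < r' := lt_of_le_of_lt (norm_nonneg _) hr'1
  have hr''pos : 0 < r'' := hr'pos.trans hr''1
  set D : ℕ → ℂ := fun n => (n.factorial : ℂ)⁻¹ * iteratedDeriv n G 0 with hD
  -- a uniform bound on `‖D n‖ * r'' ^ n`
  have hmem'' : (r'' : ℂ) ∈ ball (0:ℂ) R := by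
    simp only [mem_ball_zero_iff, Complex.norm_real, Real.norm_eq_abs, abs_of_pos hr''pos]
    exact hr''2
  have hsum'' := (Complex.hasSum_taylorSeries_on_ball hG hmem'').summable
  have hnorm_eq : ∀ n : ℕ, ‖(n.factorial : ℂ)⁻¹ • ((r'':ℂ) - 0) ^ n • iteratedDeriv n G 0‖
      = ‖D n‖ * r'' ^ n := by
    intro n
    rw [norm_smul, norm_smul, norm_pow, hD]
    simp only [sub_zero, Complex.norm_real, Real.norm_eq_abs, abs_of_pos hr''pos, norm_mul]
    ring
  have htend : Filter.Tendsto (fun n => ‖D n‖ * r'' ^ n) Filter.atTop (nhds 0) := by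
    have h0 := hsum''.tendsto_atTop_zero
    have := h0.norm
    simp only [norm_zero] at this
    exact Filter.Tendsto.congr (fun n => hnorm_eq n) this
  obtain ⟨C, hC⟩ := htend.bddAbove_range
  have hCb : ∀ n : ℕ, ‖D n‖ * r'' ^ n ≤ C := fun n => hC (Set.mem_range_self n)
  have hC0 : 0 ≤ C := le_trans (by positivity) (hCb 0)
  -- apply the termwise differentiation theorem on the ball of radius `r'`
  have key := hasDerivAt_tsum_of_isPreconnected
    (u := fun n : ℕ => C * (r' / r'') ^ n)
    (g := fun (n : ℕ) (z : ℂ) => ((n : ℂ) + 1)⁻¹ * D n * z ^ (n + 1))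
    (g' := fun (n : ℕ) (z : ℂ) => D n * z ^ n)
    (y₀ := (0:ℂ)) (y := z₁) (t := ball (0:ℂ) r')
    ?_ isOpen_ball ((convex_ball _ _).isPreconnected) ?_ ?_ ?_ ?_ ?_
  · -- identify the sum of derivatives with `G z₁`
    have hs := Complex.hasSum_taylorSeries_on_ball hG hz₁
    have : ∑' n : ℕ, D n * z₁ ^ n = G z₁ := by
      rw [← hs.tsum_eq]
      refine tsum_congr fun n => ?_
      rw [hD]
      simp only [sub_zero, smul_eq_mul]
      ring
    rw [this] at key
    exact key
  · exact (summable_geometric_of_lt_one (by positivity) (by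
      rw [div_lt_one hr''pos]; exact hr''1)).mul_left C
  · intro n y _
    have h := (hasDerivAt_pow (n + 1) y).const_mul (((n : ℂ) + 1)⁻¹ * D n)
    have hne : ((n : ℂ) + 1) ≠ 0 := Nat.cast_add_one_ne_zero n
    refine h.congr_deriv ?_
    rw [Nat.add_sub_cancel, Nat.cast_add_one, mul_mul_mul_comm, inv_mul_cancel₀ hne, one_mul]
    try ring
  · intro n y hy
    have hy' : ‖y‖ ≤ r' := le_of_lt (by simpa [mem_ball_zero_iff] using hy)
    have h1 : ‖D n * y ^ n‖ ≤ ‖D n‖ * r' ^ n := by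
      rw [norm_mul, norm_pow]
      exact mul_le_mul_of_nonneg_left (pow_le_pow_left₀ (norm_nonneg y) hy' n) (norm_nonneg _)
    refine h1.trans ?_
    have h2 : ‖D n‖ * r' ^ n = (‖D n‖ * r'' ^ n) * (r' / r'') ^ n := by
      rw [div_pow]
      field_simp
      try ring
    rw [h2]
    exact mul_le_mul_of_nonneg_right (hCb n) (by positivity)
  · exact mem_ball_self hr'pos
  · refine Summable.congr summable_zero fun n => ?_
    simp [zero_pow (Nat.succ_ne_zero n)]
  · simpa [mem_ball_zero_iff] using hr'1

lemma exists_log {R : ℝ} {G : ℂ → ℂ} (hG : DifferentiableOn ℂ G (ball (0:ℂ) R))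
    (hne : ∀ z ∈ ball (0:ℂ) R, G z ≠ 0) :
    ∃ L : ℂ → ℂ, DifferentiableOn ℂ L (ball (0:ℂ) R) ∧
      ∀ z ∈ ball (0:ℂ) R, Complex.exp (L z) = G z := by
  rcases le_or_gt R 0 with hR | hR
  · refine ⟨fun _ => 0, differentiableOn_const 0, fun z hz => absurd hz ?_⟩
    simp [Metric.ball_eq_empty.mpr hR]
  · have hG' : DifferentiableOn ℂ (deriv G) (ball (0:ℂ) R) :=
      ((hG.analyticOnNhd isOpen_ball).deriv).differentiableOn
    have hg : DifferentiableOn ℂ (fun z => deriv G z / G z) (ball (0:ℂ) R) :=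
      hG'.div hG hne
    obtain ⟨P, hP⟩ := exists_primitive hg
    set Q : ℂ → ℂ := fun z => G z * Complex.exp (-P z) with hQ
    have hQd : ∀ z ∈ ball (0:ℂ) R, HasDerivAt Q 0 z := by
      intro z hz
      have hGz : HasDerivAt G (deriv G z) z :=
        (hG.differentiableAt (isOpen_ball.mem_nhds hz)).hasDerivAt
      have hPz := hP z hz
      have hE : HasDerivAt (fun w => Complex.exp (-P w))
          (Complex.exp (-P z) * -(deriv G z / G z)) z := (hPz.neg).cexp
      have hmul := hGz.mul hE
      refine hmul.congr_deriv ?_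
      have hGne := hne z hz
      rw [div_eq_mul_inv]
      linear_combination (-(deriv G z * Complex.exp (-P z))) * mul_inv_cancel₀ hGne
    have hQdiff : DifferentiableOn ℂ Q (ball (0:ℂ) R) :=
      fun z hz => ((hQd z hz).differentiableAt).differentiableWithinAt
    have hQconst : ∀ z ∈ ball (0:ℂ) R, Q z = Q 0 := by
      intro z hz
      refine (convex_ball (0:ℂ) R).is_const_of_fderivWithin_eq_zero hQdiff ?_ hz
        (mem_ball_self hR)
      intro x hx
      rw [fderivWithin_of_isOpen isOpen_ball hx]
      have := (hQd x hx).hasFDerivAt.fderiv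
      rw [this]
      ext1
      simp
    have hQ0 : Q 0 ≠ 0 :=
      mul_ne_zero (hne 0 (mem_ball_self hR)) (Complex.exp_ne_zero _)
    have : Q 0 ∈ Set.range Complex.exp := by
      rw [Complex.range_exp]
      simpa using hQ0
    obtain ⟨c, hc⟩ := this
    refine ⟨fun z => P z + c, ?_, ?_⟩
    · intro z hz
      exact (((hP z hz).differentiableAt).add_const c).differentiableWithinAt
    · intro z hz
      have h1 : Complex.exp (P z + c) = Complex.exp (P z) * Q 0 := by
        rw [Complex.exp_add, hc]
      rw [h1, ← hQconst z hz, hQ]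
      simp only
      rw [Complex.exp_neg]
      field_simp [Complex.exp_ne_zero]
  
lemma exists_cube_root {R : ℝ} {G : ℂ → ℂ} (hG : DifferentiableOn ℂ G (ball (0:ℂ) R))
    (hne : ∀ z ∈ ball (0:ℂ) R, G z ≠ 0) :
    ∃ h : ℂ → ℂ, DifferentiableOn ℂ h (ball (0:ℂ) R) ∧
      ∀ z ∈ ball (0:ℂ) R, (h z) ^ 3 = G z := by
  obtain ⟨L, hLd, hL⟩ := exists_log hG hne
  refine ⟨fun z => Complex.exp (L z / 3), ?_, ?_⟩
  · exact (hLd.div_const 3).cexp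
  · intro z hz
    rw [← Complex.exp_nat_mul]
    rw [← hL z hz]
    congr 1
    push_cast
    ring

/-! ### Basic properties of the cubic family -/

lemma cf_zero (l b : ℂ) : cf l b 0 = 0 := by simp [cf]

lemma cf_differentiable (l b : ℂ) : Differentiable ℂ (cf l b) := by
  unfold cf
  fun_prop

lemma hasDerivAt_cf (l b z : ℂ) : HasDerivAt (cf l b) (l + 2 * b * z + 3 * z ^ 2) z := by
  have h := (((hasDerivAt_id z).const_mul l).add ((hasDerivAt_pow 2 z).const_mul b)).add
    (hasDerivAt_pow 3 z)
  refine h.congr_deriv ?_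
  rw [show (2:ℕ) - 1 = 1 from rfl, show (3:ℕ) - 1 = 2 from rfl]
  push_cast
  ring

lemma cf_cube {l b : ℂ} (hb2 : b ^ 2 = 3 * l) (z : ℂ) :
    cf l b z = (z + b / 3) ^ 3 - (b / 3) ^ 3 := by
  show l * z + b * z ^ 2 + z ^ 3 = _
  linear_combination (-(z / 3)) * hb2

lemma norm_b_le {l b : ℂ} (hl : ‖l‖ < 1) (hb2 : b ^ 2 = 3 * l) :
    ‖b‖ ≤ 2 := by
  have h1 : (‖b‖) ^ 2 = 3 * ‖l‖ := by
    rw [← norm_pow, hb2, norm_mul]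
    norm_num
  nlinarith [norm_nonneg b, norm_nonneg l]

lemma zero_mem_basin (l b : ℂ) : (0:ℂ) ∈ basin l b 0 := by
  have h : ∀ n : ℕ, (cf l b)^[n] (0:ℂ) = 0 := fun n => Function.iterate_fixed (cf_zero l b) n
  simp only [basin, mem_setOf_eq, h]
  exact tendsto_const_nhds

lemma basin_mem_cf {l b z : ℂ} : cf l b z ∈ basin l b 0 ↔ z ∈ basin l b 0 := by
  simp only [basin, mem_setOf_eq]
  have h : (fun n => (cf l b)^[n] (cf l b z)) = fun n => (cf l b)^[n + 1] z := by
    funext n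
    exact (Function.iterate_succ_apply (cf l b) n z).symm
  rw [h]
  exact tendsto_add_atTop_iff_nat (f := fun n => (cf l b)^[n] z) 1

lemma cf_contract {l b : ℂ} (hl : ‖l‖ < 1) (hb2 : b ^ 2 = 3 * l) {z : ℂ}
    (hz : ‖z‖ ≤ (1 - ‖l‖) / 8) :
    ‖cf l b z‖ ≤ (1 + ‖l‖) / 2 * ‖z‖ := by
  have hb := norm_b_le hl hb2
  have hfe : cf l b z = z * (l + b * z + z ^ 2) := by
    have hcf : cf l b z = l * z + b * z ^ 2 + z ^ 3 := rfl
    rw [hcf]; ring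
  rw [hfe, norm_mul, mul_comm ((1 + ‖l‖) / 2) (‖z‖)]
  refine mul_le_mul_of_nonneg_left ?_ (norm_nonneg z)
  have h1 : ‖l + b * z + z ^ 2‖
      ≤ ‖l‖ + ‖b‖ * ‖z‖ + (‖z‖) ^ 2 := by
    calc ‖l + b * z + z ^ 2‖
        ≤ ‖l + b * z‖ + ‖z ^ 2‖ := norm_add_le _ _
      _ ≤ ‖l‖ + ‖b * z‖ + ‖z ^ 2‖ :=
          add_le_add_left (norm_add_le _ _) _
      _ = ‖l‖ + ‖b‖ * ‖z‖ + (‖z‖) ^ 2 := by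
          rw [norm_mul, norm_pow]
  refine h1.trans ?_
  have hzn : 0 ≤ ‖z‖ := norm_nonneg z
  have hln : 0 ≤ ‖l‖ := norm_nonneg l
  have h2 : ‖b‖ * ‖z‖ ≤ 2 * ‖z‖ :=
    mul_le_mul_of_nonneg_right hb hzn
  have h4 : (1 - ‖l‖) ^ 2 ≤ 1 - ‖l‖ := by nlinarith
  have h3 : (‖z‖) ^ 2 ≤ (1 - ‖l‖) / 64 := by
    have h5 : (‖z‖) ^ 2 ≤ ((1 - ‖l‖) / 8) ^ 2 :=
      pow_le_pow_left₀ hzn hz 2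
    nlinarith
  linarith

lemma cf_iter_le {l b : ℂ} (hl : ‖l‖ < 1) (hb2 : b ^ 2 = 3 * l) {z : ℂ}
    (hz : ‖z‖ ≤ (1 - ‖l‖) / 8) (n : ℕ) :
    ‖(cf l b)^[n] z‖ ≤ ((1 + ‖l‖) / 2) ^ n * ‖z‖ := by
  induction n with
  | zero => simp
  | succ n ih =>
    have hq0 : 0 ≤ (1 + ‖l‖) / 2 := by positivity
    have hq1 : (1 + ‖l‖) / 2 ≤ 1 := by linarith
    have hzn : ‖(cf l b)^[n] z‖ ≤ (1 - ‖l‖) / 8 := by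
      calc ‖(cf l b)^[n] z‖ ≤ ((1 + ‖l‖) / 2) ^ n * ‖z‖ := ih
        _ ≤ 1 * ‖z‖ := by
            refine mul_le_mul_of_nonneg_right ?_ (norm_nonneg z)
            exact pow_le_one₀ hq0 hq1
        _ ≤ (1 - ‖l‖) / 8 := by rw [one_mul]; exact hz
    rw [Function.iterate_succ_apply']
    calc ‖cf l b ((cf l b)^[n] z)‖
        ≤ (1 + ‖l‖) / 2 * ‖(cf l b)^[n] z‖ := cf_contract hl hb2 hzn
      _ ≤ (1 + ‖l‖) / 2 * (((1 + ‖l‖) / 2) ^ n * ‖z‖) := by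
          exact mul_le_mul_of_nonneg_left ih hq0
      _ = ((1 + ‖l‖) / 2) ^ (n + 1) * ‖z‖ := by ring

lemma ball_subset_basin {l b : ℂ} (hl : ‖l‖ < 1) (hb2 : b ^ 2 = 3 * l) :
    ball (0:ℂ) ((1 - ‖l‖) / 8) ⊆ basin l b 0 := by
  intro z hz
  rw [mem_ball_zero_iff] at hz
  have hz' : ‖z‖ ≤ (1 - ‖l‖) / 8 := le_of_lt hz
  simp only [basin, mem_setOf_eq]
  have hq0 : 0 ≤ (1 + ‖l‖) / 2 := by positivity
  have hq1 : (1 + ‖l‖) / 2 < 1 := by linarith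
  have hlim : Filter.Tendsto (fun n : ℕ => ((1 + ‖l‖) / 2) ^ n * ‖z‖)
      Filter.atTop (nhds 0) := by
    simpa using (tendsto_pow_atTop_nhds_zero_of_lt_one hq0 hq1).mul_const (‖z‖)
  refine squeeze_zero_norm (fun n => ?_) hlim
  simpa [] using cf_iter_le hl hb2 hz' n

lemma basin_isOpen {l b : ℂ} (hl : ‖l‖ < 1) (hb2 : b ^ 2 = 3 * l) :
    IsOpen (basin l b 0) := by
  rw [isOpen_iff_mem_nhds]
  intro z hz
  have hz' : Filter.Tendsto (fun n => (cf l b)^[n] z) Filter.atTop (nhds 0) := hz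
  have hρ : 0 < (1 - ‖l‖) / 8 := by linarith
  obtain ⟨N, hN⟩ := (hz'.eventually (Metric.ball_mem_nhds (0:ℂ) hρ)).exists
  have hcont : Continuous ((cf l b)^[N]) := (cf_differentiable l b).continuous.iterate N
  have hpre : (cf l b)^[N] ⁻¹' (ball 0 ((1 - ‖l‖) / 8)) ∈ nhds z :=
    hcont.continuousAt.preimage_mem_nhds (Metric.isOpen_ball.mem_nhds hN)
  filter_upwards [hpre] with w hw
  have h1 : Filter.Tendsto (fun n => (cf l b)^[n] ((cf l b)^[N] w)) Filter.atTop (nhds 0) :=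
    ball_subset_basin hl hb2 hw
  show Filter.Tendsto (fun n => (cf l b)^[n] w) Filter.atTop (nhds 0)
  rw [← tendsto_add_atTop_iff_nat N]
  have h2 : (fun n => (cf l b)^[n + N] w) = fun n => (cf l b)^[n] ((cf l b)^[N] w) :=
    funext fun n => Function.iterate_add_apply _ n N w
  rw [h2]
  exact h1

lemma cf_big {l b : ℂ} (hl : ‖l‖ < 1) (hb2 : b ^ 2 = 3 * l) {w : ℂ}
    (hw : 3 ≤ ‖w‖) : 3 ≤ ‖cf l b w‖ := by
  have hb := norm_b_le hl hb2
  rw [] at hw hb ⊢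
  rw [] at hl
  have h0 : w ^ 3 = cf l b w - b * w ^ 2 - l * w := by
    have hcf : cf l b w = l * w + b * w ^ 2 + w ^ 3 := rfl
    rw [hcf]; ring
  have hwn : 0 ≤ ‖w‖ := norm_nonneg w
  have h1 : ‖w‖ ^ 3 ≤ ‖cf l b w‖ + 2 * ‖w‖ ^ 2 + 1 * ‖w‖ := by
    have e1 : ‖w‖ ^ 3 = ‖cf l b w - b * w ^ 2 - l * w‖ := by rw [← h0, norm_pow]
    have e2 : ‖cf l b w - b * w ^ 2 - l * w‖ ≤ ‖cf l b w - b * w ^ 2‖ + ‖l * w‖ :=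
      norm_sub_le _ _
    have e3 : ‖cf l b w - b * w ^ 2‖ ≤ ‖cf l b w‖ + ‖b * w ^ 2‖ := norm_sub_le _ _
    have e4 : ‖b * w ^ 2‖ ≤ 2 * ‖w‖ ^ 2 := by
      rw [norm_mul, norm_pow]
      exact mul_le_mul_of_nonneg_right hb (by positivity)
    have e5 : ‖l * w‖ ≤ 1 * ‖w‖ := by
      rw [norm_mul]
      exact mul_le_mul_of_nonneg_right (le_of_lt hl) hwn
    linarith
  nlinarith [norm_nonneg (cf l b w)]

lemma basin_subset_ball {l b : ℂ} (hl : ‖l‖ < 1) (hb2 : b ^ 2 = 3 * l) :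
    basin l b 0 ⊆ ball (0:ℂ) 3 := by
  intro z hz
  rw [mem_ball_zero_iff]
  by_contra h
  push_neg at h
  have hall : ∀ n, 3 ≤ ‖(cf l b)^[n] z‖ := by
    intro n
    induction n with
    | zero => simpa using h
    | succ n ih =>
      rw [Function.iterate_succ_apply']
      exact cf_big hl hb2 ih
  have hz' : Filter.Tendsto (fun n => (cf l b)^[n] z) Filter.atTop (nhds 0) := hz
  obtain ⟨n, hn⟩ := (hz'.eventually (Metric.ball_mem_nhds (0:ℂ) (by norm_num : (0:ℝ) < 3))).exists
  simp only [Metric.mem_ball, Complex.dist_eq, sub_zero] at hn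
  linarith [hall n]

/-! ### The critical point lies in the immediate basin -/

lemma crit_mem {l b : ℂ} (hl : ‖l‖ < 1) (hb : b ≠ 0) (hb2 : b ^ 2 = 3 * l) :
    -(b / 3) ∈ connectedComponentIn (basin l b 0) 0 := by
  by_contra hcrit
  have hl0 : l ≠ 0 := by
    intro h
    apply hb
    have hb0 : b ^ 2 = 0 := by rw [hb2, h, mul_zero]
    exact (pow_eq_zero_iff two_ne_zero).mp hb0
  have htpos : 0 < ‖l‖ := norm_pos_iff.mpr hl0
  have hBopen : IsOpen (basin l b 0) := basin_isOpen hl hb2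
  have h0B : (0:ℂ) ∈ basin l b 0 := zero_mem_basin l b
  have hΩopen : IsOpen (connectedComponentIn (basin l b 0) 0) := hBopen.connectedComponentIn
  have h0Ω : (0:ℂ) ∈ connectedComponentIn (basin l b 0) 0 := mem_connectedComponentIn h0B
  have hΩB : connectedComponentIn (basin l b 0) 0 ⊆ basin l b 0 := connectedComponentIn_subset _ _
  have hΩconn : IsPreconnected (connectedComponentIn (basin l b 0) 0) :=
    isPreconnected_connectedComponentIn
  have hmax : ∀ S : Set ℂ, IsPreconnected S → (0:ℂ) ∈ S → S ⊆ basin l b 0 →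
      S ⊆ connectedComponentIn (basin l b 0) 0 :=
    fun S hS h0 hSB => hS.subset_connectedComponentIn h0 hSB
  have hB3 : basin l b 0 ⊆ ball (0:ℂ) 3 := basin_subset_ball hl hb2
  -- the complement of the component inside the basin is open
  have hdiff_open : IsOpen (basin l b 0 \ connectedComponentIn (basin l b 0) 0) := by
    rw [Metric.isOpen_iff]
    intro x hx
    obtain ⟨ε, hε, hball⟩ := Metric.isOpen_iff.mp hBopen x hx.1
    refine ⟨ε, hε, fun y hy => ⟨hball hy, fun hyΩ => hx.2 ?_⟩⟩
    have hU : IsPreconnected (ball x ε ∪ connectedComponentIn (basin l b 0) 0) :=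
      IsPreconnected.union y hy hyΩ (convex_ball x ε).isPreconnected hΩconn
    have hsub : ball x ε ∪ connectedComponentIn (basin l b 0) 0
        ⊆ connectedComponentIn (basin l b 0) 0 :=
      hmax _ hU (Or.inr h0Ω) (union_subset hball hΩB)
    exact hsub (Or.inl (mem_ball_self hε))
  have hclosΩ : closure (connectedComponentIn (basin l b 0) 0) ∩ basin l b 0
      ⊆ connectedComponentIn (basin l b 0) 0 := by
    intro x hx
    by_contra hxΩ
    obtain ⟨ε, hε, hball⟩ := Metric.isOpen_iff.mp hdiff_open x ⟨hx.2, hxΩ⟩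
    obtain ⟨y, hy1, hy2⟩ := Metric.mem_closure_iff.mp hx.1 ε hε
    exact (hball (by rw [mem_ball, dist_comm]; exact hy2)).2 hy1
  have hfwd : ∀ z ∈ basin l b 0, cf l b z ∈ basin l b 0 := fun z hz => basin_mem_cf.mpr hz
  have hbwd : ∀ z : ℂ, cf l b z ∈ basin l b 0 → z ∈ basin l b 0 := fun z => basin_mem_cf.mp
  have hfΩ : ∀ z ∈ connectedComponentIn (basin l b 0) 0,
      cf l b z ∈ connectedComponentIn (basin l b 0) 0 := by
    intro z hz
    have himg : IsPreconnected (cf l b '' connectedComponentIn (basin l b 0) 0) :=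
      hΩconn.image _ (cf_differentiable l b).continuous.continuousOn
    have h0i : (0:ℂ) ∈ cf l b '' connectedComponentIn (basin l b 0) 0 :=
      ⟨0, h0Ω, cf_zero l b⟩
    have hsub : cf l b '' connectedComponentIn (basin l b 0) 0 ⊆ basin l b 0 := by
      rintro _ ⟨w, hw, rfl⟩
      exact hfwd w (hΩB hw)
    exact hmax _ himg h0i hsub ⟨z, hz, rfl⟩
  -- surjectivity of `cf l b` on the component
  have hsurj : ∀ y ∈ connectedComponentIn (basin l b 0) 0,
      ∃ x ∈ connectedComponentIn (basin l b 0) 0, cf l b x = y := by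
    have hanal : AnalyticOnNhd ℂ (cf l b) (connectedComponentIn (basin l b 0) 0) :=
      ((cf_differentiable l b).differentiableOn).analyticOnNhd hΩopen
    have himage_open : IsOpen (cf l b '' connectedComponentIn (basin l b 0) 0) := by
      rcases hanal.is_constant_or_isOpen hΩconn with hconst | hopen
      · exfalso
        obtain ⟨w, hw⟩ := hconst
        have hw0 : w = 0 := by rw [← hw 0 h0Ω, cf_zero]
        obtain ⟨r₁, hr₁, hball₁⟩ := Metric.isOpen_iff.mp hΩopen 0 h0Ω
        set δ : ℝ := min (r₁ / 2) (min (‖l‖ / 4) 1) with hδdef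
        have hδpos : 0 < δ := lt_min (by linarith) (lt_min (by positivity) one_pos)
        have hδr : (δ:ℂ) ∈ ball (0:ℂ) r₁ := by
          rw [mem_ball_zero_iff, Complex.norm_real, Real.norm_eq_abs, abs_of_pos hδpos]
          have : δ ≤ r₁ / 2 := min_le_left _ _
          linarith
        have hzero : cf l b (δ:ℂ) = 0 := by rw [hw _ (hball₁ hδr), hw0]
        have hcfδ : l * δ + b * (δ:ℂ)^2 + (δ:ℂ)^3 = 0 := hzero
        have hfac : (δ:ℂ) * (l + b * δ + (δ:ℂ)^2) = 0 := by linear_combination hcfδ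
        have hδne : (δ:ℂ) ≠ 0 := by
          simp only [ne_eq, Complex.ofReal_eq_zero]
          exact hδpos.ne'
        have hr := (mul_eq_zero.mp hfac).resolve_left hδne
        have h2 : l = -(b * δ + (δ:ℂ)^2) := by linear_combination hr
        have hbn := norm_b_le hl hb2
        rw [] at hbn
        have habs : ‖l‖ ≤ 2 * δ + δ^2 := by
          rw [h2, norm_neg]
          calc ‖b * (δ:ℂ) + (δ:ℂ)^2‖ ≤ ‖b * (δ:ℂ)‖ + ‖(δ:ℂ)^2‖ := norm_add_le _ _
            _ ≤ 2 * δ + δ^2 := by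
                rw [norm_mul, norm_pow, Complex.norm_real, Real.norm_eq_abs, abs_of_pos hδpos]
                nlinarith [hδpos.le]
        have hδ4 : δ ≤ ‖l‖ / 4 := le_trans (min_le_right _ _) (min_le_left _ _)
        have hδ1 : δ ≤ 1 := le_trans (min_le_right _ _) (min_le_right _ _)
        nlinarith
      · exact hopen _ (subset_refl _) hΩopen
    have hcompact : IsCompact (closure (connectedComponentIn (basin l b 0) 0)) :=
      (Metric.isBounded_ball.subset (hΩB.trans hB3)).isCompact_closure
    have hclosed : IsClosed (cf l b '' closure (connectedComponentIn (basin l b 0) 0)) :=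
      (hcompact.image (cf_differentiable l b).continuous).isClosed
    have hsub2 : closure (cf l b '' connectedComponentIn (basin l b 0) 0)
        ⊆ cf l b '' closure (connectedComponentIn (basin l b 0) 0) :=
      closure_minimal (Set.image_mono subset_closure) hclosed
    by_contra hcon
    push_neg at hcon
    obtain ⟨y₀, hy₀Ω, hy₀⟩ := hcon
    have hV : IsOpen (closure (cf l b '' connectedComponentIn (basin l b 0) 0))ᶜ :=
      isClosed_closure.isOpen_compl
    have hdisj : Disjoint (cf l b '' connectedComponentIn (basin l b 0) 0)
        (closure (cf l b '' connectedComponentIn (basin l b 0) 0))ᶜ :=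
      disjoint_compl_right.mono_left subset_closure
    have hcover : connectedComponentIn (basin l b 0) 0
        ⊆ (cf l b '' connectedComponentIn (basin l b 0) 0)
          ∪ (closure (cf l b '' connectedComponentIn (basin l b 0) 0))ᶜ := by
      intro x hxΩ
      by_cases hx : x ∈ closure (cf l b '' connectedComponentIn (basin l b 0) 0)
      · left
        obtain ⟨w, hwcl, hwx⟩ := hsub2 hx
        have hwB : w ∈ basin l b 0 := hbwd w (by rw [hwx]; exact hΩB hxΩ)
        exact ⟨w, hclosΩ ⟨hwcl, hwB⟩, hwx⟩
      · right; exact hx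
    rcases hΩconn.subset_or_subset himage_open hV hdisj hcover with h | h
    · obtain ⟨x, hx1, hx2⟩ := h hy₀Ω
      exact hy₀ x hx1 hx2
    · have h0img : (0:ℂ) ∈ cf l b '' connectedComponentIn (basin l b 0) 0 :=
        ⟨0, h0Ω, cf_zero l b⟩
      exact (h h0Ω) (subset_closure h0img)
  -- the critical value is not in the component
  have hcv : -((b/3)^3) ∉ connectedComponentIn (basin l b 0) 0 := by
    intro hmem
    obtain ⟨x, hxΩ, hx⟩ := hsurj _ hmem
    have h1 : (x + b/3)^3 - (b/3)^3 = -((b/3)^3) := by rw [← cf_cube hb2 x, hx]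
    have h2 : (x + b/3)^3 = 0 := by linear_combination h1
    have h3 : x + b/3 = 0 := (pow_eq_zero_iff (by norm_num : (3:ℕ) ≠ 0)).mp h2
    have hx0 : x = -(b/3) := by linear_combination h3
    exact hcrit (hx0 ▸ hxΩ)
  -- the lifting step
  have hlift : ∀ R : ℝ, 0 < R → ∀ χ : ℂ → ℂ, DifferentiableOn ℂ χ (ball 0 R) →
      χ 0 = 0 → (∀ z ∈ ball (0:ℂ) R, χ z ∈ connectedComponentIn (basin l b 0) 0) →
      ∃ χ' : ℂ → ℂ, DifferentiableOn ℂ χ' (ball 0 (R / ‖l‖)) ∧ χ' 0 = 0 ∧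
        (∀ z ∈ ball (0:ℂ) (R / ‖l‖), χ' z ∈ connectedComponentIn (basin l b 0) 0) ∧
        deriv χ' 0 = deriv χ 0 := by
    intro R hR χ hχd hχ0 hχΩ
    have hRt : 0 < R / ‖l‖ := by positivity
    have hmapl : ∀ z ∈ ball (0:ℂ) (R / ‖l‖), l * z ∈ ball (0:ℂ) R := by
      intro z hz
      rw [mem_ball_zero_iff] at hz ⊢
      rw [norm_mul]
      calc ‖l‖ * ‖z‖ < ‖l‖ * (R / ‖l‖) := by
            apply mul_lt_mul_of_pos_left hz
            rw []; exact htpos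
        _ = R := by rw []; field_simp
    set G : ℂ → ℂ := fun z => χ (l * z) + (b/3)^3 with hGdef
    have hGd : DifferentiableOn ℂ G (ball 0 (R / ‖l‖)) := by
      apply DifferentiableOn.add_const
      exact hχd.comp ((differentiable_id.const_mul l).differentiableOn)
        (fun z hz => hmapl z hz)
    have hGne : ∀ z ∈ ball (0:ℂ) (R / ‖l‖), G z ≠ 0 := by
      intro z hz h0
      apply hcv
      have h0' : χ (l * z) + (b/3)^3 = 0 := h0
      have : χ (l * z) = -((b/3)^3) := by linear_combination h0'
      rw [← this]
      exact hχΩ _ (hmapl z hz)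
    obtain ⟨h, hhd, hh3⟩ := exists_cube_root hGd hGne
    have h0mem : (0:ℂ) ∈ ball (0:ℂ) (R / ‖l‖) := mem_ball_self hRt
    have hb3 : (b/3 : ℂ) ≠ 0 := div_ne_zero hb (by norm_num)
    have hG0 : G 0 = (b/3)^3 := by
      show χ (l * 0) + (b/3)^3 = (b/3)^3
      rw [mul_zero, hχ0, zero_add]
    have hh0 : h 0 ≠ 0 := by
      intro h00
      have h3 := hh3 0 h0mem
      rw [h00] at h3
      apply hGne 0 h0mem
      rw [← h3]
      norm_num
    set η : ℂ := (b/3) / h 0 with hηdef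
    have hη3 : η^3 = 1 := by
      rw [hηdef, div_pow, hh3 0 h0mem, hG0, div_self (pow_ne_zero 3 hb3)]
    set χ' : ℂ → ℂ := fun z => η * h z - b/3 with hχ'def
    have hχ'b : ∀ z, χ' z + b/3 = η * h z := by
      intro z
      show η * h z - b/3 + b/3 = η * h z
      ring
    have hkey : ∀ z ∈ ball (0:ℂ) (R / ‖l‖), cf l b (χ' z) = χ (l * z) := by
      intro z hz
      rw [cf_cube hb2, hχ'b z, mul_pow, hη3, one_mul, hh3 z hz]
      show χ (l * z) + (b/3)^3 - (b/3)^3 = χ (l * z)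
      ring
    have hχ'0 : χ' 0 = 0 := by
      show η * h 0 - b/3 = 0
      rw [hηdef, div_mul_cancel₀ _ hh0]
      ring
    have hχ'd : DifferentiableOn ℂ χ' (ball 0 (R / ‖l‖)) := by
      intro z hz
      exact (((hhd z hz).const_mul η).sub (differentiableWithinAt_const _))
    have hχ'Ω : ∀ z ∈ ball (0:ℂ) (R / ‖l‖),
        χ' z ∈ connectedComponentIn (basin l b 0) 0 := by
      have hS : IsPreconnected (χ' '' ball 0 (R / ‖l‖)) :=
        ((convex_ball _ _).isPreconnected).image _ hχ'd.continuousOn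
      have h0S : (0:ℂ) ∈ χ' '' ball 0 (R / ‖l‖) := ⟨0, h0mem, hχ'0⟩
      have hSB : χ' '' ball 0 (R / ‖l‖) ⊆ basin l b 0 := by
        rintro _ ⟨z, hz, rfl⟩
        apply hbwd
        rw [hkey z hz]
        exact hΩB (hχΩ _ (hmapl z hz))
      intro z hz
      exact hmax _ hS h0S hSB ⟨z, hz, rfl⟩
    refine ⟨χ', hχ'd, hχ'0, hχ'Ω, ?_⟩
    have hd1 : HasDerivAt χ' (deriv χ' 0) 0 :=
      ((hχ'd.differentiableAt (isOpen_ball.mem_nhds h0mem))).hasDerivAt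
    have hd2 : HasDerivAt χ (deriv χ 0) 0 :=
      ((hχd.differentiableAt (isOpen_ball.mem_nhds (mem_ball_self hR)))).hasDerivAt
    have hcfd : HasDerivAt (cf l b) l 0 := by
      have := hasDerivAt_cf l b 0
      simpa using this
    have hcfd' : HasDerivAt (cf l b) l (χ' 0) := by rw [hχ'0]; exact hcfd
    have hLd : HasDerivAt (fun z => cf l b (χ' z)) (l * deriv χ' 0) 0 :=
      HasDerivAt.comp 0 hcfd' hd1
    have hlz : HasDerivAt (fun z : ℂ => l * z) l 0 := by
      simpa using (hasDerivAt_id (0:ℂ)).const_mul l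
    have hd2' : HasDerivAt χ (deriv χ 0) (l * 0) := by rw [mul_zero]; exact hd2
    have hRd : HasDerivAt (fun z => χ (l * z)) (deriv χ 0 * l) 0 :=
      HasDerivAt.comp 0 hd2' hlz
    have hev : (fun z => χ (l * z)) =ᶠ[nhds (0:ℂ)] (fun z => cf l b (χ' z)) := by
      filter_upwards [isOpen_ball.mem_nhds h0mem] with z hz
      exact (hkey z hz).symm
    have hLd' : HasDerivAt (fun z => χ (l * z)) (l * deriv χ' 0) 0 :=
      hLd.congr_of_eventuallyEq hev
    have huniq : l * deriv χ' 0 = deriv χ 0 * l := hLd'.unique hRd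
    apply mul_left_cancel₀ hl0
    rw [huniq]
    ring
  -- iterate the lifting
  obtain ⟨r₀, hr₀pos, hr₀ball⟩ := Metric.isOpen_iff.mp hΩopen 0 h0Ω
  have hseq : ∀ n : ℕ, ∃ χ : ℂ → ℂ,
      DifferentiableOn ℂ χ (ball 0 (r₀ / (‖l‖)^n)) ∧ χ 0 = 0 ∧
      (∀ z ∈ ball (0:ℂ) (r₀ / (‖l‖)^n),
        χ z ∈ connectedComponentIn (basin l b 0) 0) ∧ deriv χ 0 = 1 := by
    intro n
    induction n with
    | zero =>
      refine ⟨id, differentiableOn_id, rfl, ?_, ?_⟩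
      · intro z hz
        apply hr₀ball
        simpa using hz
      · simp
    | succ n ih =>
      obtain ⟨χ, h1, h2, h3, h4⟩ := ih
      have hrn : 0 < r₀ / (‖l‖)^n := by positivity
      obtain ⟨χ', c1, c2, c3, c4⟩ := hlift (r₀ / (‖l‖)^n) hrn χ h1 h2 h3
      have heq : r₀ / (‖l‖)^(n+1) = r₀ / (‖l‖)^n / ‖l‖ := by
        rw [pow_succ, ← div_div]
      rw [heq]
      exact ⟨χ', c1, c2, c3, by rw [c4, h4]⟩
  -- Schwarz lemma contradiction
  have hq : Filter.Tendsto (fun n : ℕ => (‖l‖)^n) Filter.atTop (nhds 0) :=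
    tendsto_pow_atTop_nhds_zero_of_lt_one (norm_nonneg l) hl
  obtain ⟨n, hn⟩ := (hq.eventually (gt_mem_nhds (show (0:ℝ) < r₀ / 3 by positivity))).exists
  obtain ⟨χ, h1, h2, h3, h4⟩ := hseq n
  have hRn : 0 < r₀ / (‖l‖)^n := by positivity
  have hmaps : Set.MapsTo χ (ball (0:ℂ) (r₀ / (‖l‖)^n)) (ball (χ 0) 3) := by
    intro z hz
    rw [h2]
    exact hB3 (hΩB (h3 z hz))
  have hSch := Complex.norm_deriv_le_div_of_mapsTo_ball h1 (hmaps.mono_right ball_subset_closedBall) hRn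
  rw [h4] at hSch
  simp only [norm_one] at hSch
  have hlt : 3 / (r₀ / (‖l‖)^n) < 1 := by
    rw [div_lt_one hRn, lt_div_iff₀ (pow_pos htpos n)]
    nlinarith [pow_pos htpos n]
  linarith

/-! ### PHD on the unicritical slice and conclusion -/

lemma PHD_slice {l b : ℂ} (hl : ‖l‖ < 1) (hb2 : b ^ 2 = 3 * l) : PHD l b := by
  refine ⟨0, cf_zero l b, by simpa using hl, ?_⟩
  intro c hc
  have hc' : l + 2 * b * c + 3 * c ^ 2 = 0 := hc
  by_cases hb : b = 0
  · subst hb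
    have hl0 : l = 0 := by linear_combination (-1/3 : ℂ) * hb2
    subst hl0
    have hc2 : c ^ 2 = 0 := by linear_combination hc' / 3
    have hc0 : c = 0 := (pow_eq_zero_iff two_ne_zero).mp hc2
    rw [hc0]
    exact mem_connectedComponentIn (zero_mem_basin 0 0)
  · have h3 : (c + b/3)^2 = 0 := by
      linear_combination (1/3 : ℂ) * hc' + (1/9 : ℂ) * hb2
    have h4 : c + b/3 = 0 := (pow_eq_zero_iff two_ne_zero).mp h3
    have hc0 : c = -(b/3) := by linear_combination h4
    rw [hc0]
    exact crit_mem hl hb hb2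

lemma mem_PP {l : ℂ} (hl : ‖l‖ ≤ 1) : (l, 3 * l) ∈ PP := by
  unfold PP
  rw [Metric.mem_closure_iff]
  intro ε hε
  have hmin_pos : 0 < min (1/2 : ℝ) (ε/8) := lt_min (by norm_num) (by positivity)
  have hmin_le : min (1/2 : ℝ) (ε/8) ≤ 1/2 := min_le_left _ _
  have hmin_le' : min (1/2 : ℝ) (ε/8) ≤ ε/8 := min_le_right _ _
  set s : ℝ := 1 - min (1/2) (ε/8) with hsdef
  have hs0 : 0 ≤ s := by rw [hsdef]; linarith
  have hs1 : s < 1 := by rw [hsdef]; linarith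
  obtain ⟨b, hb⟩ := IsAlgClosed.exists_pow_nat_eq ((3:ℂ) * ((s:ℂ) * l)) (n := 2) (by norm_num)
  have habs : ‖(s:ℂ) * l‖ < 1 := by
    rw [norm_mul, Complex.norm_real, Real.norm_eq_abs, abs_of_nonneg hs0]
    calc s * ‖l‖ ≤ s * 1 := mul_le_mul_of_nonneg_left hl hs0
      _ < 1 := by linarith
  refine ⟨((s:ℂ) * l, b^2), ⟨(s:ℂ) * l, b, PHD_slice habs hb, rfl⟩, ?_⟩
  rw [hb, Prod.dist_eq]
  have h1s : |1 - s| = min (1/2 : ℝ) (ε/8) := by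
    rw [hsdef, abs_of_nonneg (by linarith)]
    ring
  apply max_lt
  · rw [Complex.dist_eq]
    have he : l - (s:ℂ) * l = ((1 - s : ℝ) : ℂ) * l := by push_cast; ring
    rw [he, norm_mul, Complex.norm_real, Real.norm_eq_abs, h1s]
    calc min (1/2 : ℝ) (ε/8) * ‖l‖ ≤ min (1/2 : ℝ) (ε/8) * 1 :=
          mul_le_mul_of_nonneg_left hl hmin_pos.le
      _ < ε := by linarith
  · rw [Complex.dist_eq]
    have he : 3 * l - 3 * ((s:ℂ) * l) = 3 * (((1 - s : ℝ) : ℂ) * l) := by push_cast; ring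
    rw [he, norm_mul, norm_mul, Complex.norm_real, Real.norm_eq_abs, h1s]
    have h3 : ‖(3:ℂ)‖ = 3 := by norm_num
    rw [h3]
    calc 3 * (min (1/2 : ℝ) (ε/8) * ‖l‖) ≤ 3 * (min (1/2 : ℝ) (ε/8) * 1) := by
          apply mul_le_mul_of_nonneg_left _ (by norm_num)
          exact mul_le_mul_of_nonneg_left hl hmin_pos.le
      _ < ε := by linarith

end PRaux



/-- If `|λ| ≤ 1` and `f_{λ,b}` is potentially renormalizable, then `f_{λ,b}` has two
distinct critical points; equivalently, `b² ≠ 3λ`. -/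
theorem stmt_0 (l b : ℂ) (hl : ‖l‖ ≤ 1) (hpr : PotRenorm l b) :
    (∃ c₁ c₂ : ℂ, c₁ ≠ c₂ ∧ IsCrit l b c₁ ∧ IsCrit l b c₂) ∧ b ^ 2 ≠ 3 * l := by
  have hne : b ^ 2 ≠ 3 * l := by
    intro h
    apply hpr
    show (l, b ^ 2) ∈ PP
    rw [h]
    exact PRaux.mem_PP hl
  refine ⟨?_, hne⟩
  obtain ⟨d, hd⟩ := IsAlgClosed.exists_pow_nat_eq (b ^ 2 - 3 * l) (n := 2) (by norm_num)
  have hd0 : d ≠ 0 := by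
    intro h0
    apply hne
    have h1 : b ^ 2 - 3 * l = 0 := by rw [← hd, h0]; ring
    linear_combination h1
  refine ⟨(-b + d) / 3, (-b - d) / 3, ?_, ?_, ?_⟩
  · intro hcc
    apply hd0
    have h3 : (-b + d) = (-b - d) := by linear_combination 3 * hcc
    linear_combination h3 / 2
  · show l + 2 * b * ((-b + d) / 3) + 3 * ((-b + d) / 3) ^ 2 = 0
    linear_combination (1/3 : ℂ) * hd
  · show l + 2 * b * ((-b - d) / 3) + 3 * ((-b - d) / 3) ^ 2 = 0
    linear_combination (1/3 : ℂ) * hd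
end

section
/- Let P: ℂ → ℂ be a nonconstant polynomial and T ⊆ ℂ a compact set. Then the following two properties are equivalent: (1) the function ν_T is continuous on P(T); (2) there exists an open neighborhood U of T such that for every z ∈ U \ T one has P(z) ∉ P(T). Moreover, if T is connected, these conditions are also equivalent to: (3) T is a connected component of P⁻¹(P(T)). -/
open Filter Topology Polynomial Bornology

section Helpers

open Metric Set NNReal

lemma card_roots_eq {q : ℂ[X]} (hq : q ≠ 0) : Multiset.card q.roots = q.natDegree :=
  (Polynomial.splits_iff_card_roots.mp (IsAlgClosed.splits q))

lemma roots_rel_aux : ∀ (d : ℕ) (p : ℂ[X]), p.Monic → p.natDegree = d →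
    ∀ ε : ℝ, 0 < ε → ∃ δ > 0, ∀ q : ℂ[X], q.Monic → q.natDegree = d →
      (∀ i, dist (q.coeff i) (p.coeff i) ≤ δ) →
      Multiset.Rel (fun a b => dist a b < ε) q.roots p.roots := by
  intro d
  induction d with
  | zero =>
    intro p hp hdeg ε hε
    refine ⟨1, one_pos, fun q hq hqdeg _ => ?_⟩
    rw [hp.natDegree_eq_zero.mp hdeg]
    rw [hq.natDegree_eq_zero.mp hqdeg]
    simp [Polynomial.roots_one]
  | succ d ih =>
    intro p hp hdeg ε hε
    by_contra hcon
    push_neg at hcon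
    have H : ∀ n : ℕ, ∃ q : ℂ[X], q.Monic ∧ q.natDegree = d + 1 ∧
        (∀ i, dist (q.coeff i) (p.coeff i) ≤ 1 / (n + 1)) ∧
        ¬ Multiset.Rel (fun a b => dist a b < ε) q.roots p.roots := by
      intro n
      obtain ⟨q, h1, h2, h3, h4⟩ := hcon (1 / (n + 1)) (by positivity)
      exact ⟨q, h1, h2, h3, h4⟩
    choose q hq1 hq2 hq3 hq4 using H
    -- coefficients tend to those of p
    have hco : ∀ i, Tendsto (fun n => (q n).coeff i) atTop (𝓝 (p.coeff i)) := by
      intro i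
      rw [tendsto_iff_dist_tendsto_zero]
      refine squeeze_zero (fun n => dist_nonneg) (fun n => hq3 n i) ?_
      exact tendsto_one_div_add_atTop_nhds_zero_nat
    -- pick a root of each q n
    have hroots : ∀ n, ∃ x, x ∈ (q n).roots := by
      intro n
      apply Multiset.exists_mem_of_ne_zero
      intro h
      have := card_roots_eq (hq1 n).ne_zero
      rw [h, hq2 n] at this
      simp at this
    choose r hr using hroots
    -- uniform bound on the roots
    set M : ℝ≥0 := (∑ i ∈ Finset.range (d + 1), ‖p.coeff i‖₊) + 2 with hMdef
    have hM : ∀ n, ‖r n‖₊ ≤ M := by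
      intro n
      have hb := Polynomial.IsRoot.norm_lt_cauchyBound (hq1 n).ne_zero
        (Polynomial.isRoot_of_mem_roots (hr n))
      refine le_trans hb.le ?_
      rw [Polynomial.cauchyBound, (hq1 n).leadingCoeff]
      simp only [nnnorm_one, div_one, hMdef]
      have h1 : Finset.sup (Finset.range (q n).natDegree) (‖(q n).coeff ·‖₊)
          ≤ (∑ i ∈ Finset.range (d + 1), ‖p.coeff i‖₊) + 1 := by
        apply Finset.sup_le
        intro i hi
        have h2 : ‖(q n).coeff i‖₊ ≤ ‖p.coeff i‖₊ + 1 := by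
          rw [← NNReal.coe_le_coe]
          push_cast
          have := hq3 n i
          rw [dist_eq_norm] at this
          have h3 : (1:ℝ) / (n+1) ≤ 1 := by
            rw [div_le_one (by positivity)]; linarith [Nat.cast_nonneg (α := ℝ) n]
          calc ‖(q n).coeff i‖ ≤ ‖p.coeff i‖ + ‖(q n).coeff i - p.coeff i‖ := by
                have := norm_add_le (p.coeff i) ((q n).coeff i - p.coeff i)
                simpa using this
            _ ≤ ‖p.coeff i‖ + 1 := by linarith
        refine h2.trans (add_le_add_left ?_ 1)
        rw [hq2 n] at hi
        exact Finset.single_le_sum (f := fun i => ‖p.coeff i‖₊) (fun _ _ => zero_le) hi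
      calc Finset.sup (Finset.range (q n).natDegree) (‖(q n).coeff ·‖₊) + 1
          ≤ ((∑ i ∈ Finset.range (d + 1), ‖p.coeff i‖₊) + 1) + 1 := add_le_add_left h1 1
        _ = _ := by ring
    -- extract a convergent subsequence of roots
    obtain ⟨a, -, φ, hφmono, hφtend⟩ := tendsto_subseq_of_bounded
      (isBounded_closedBall (x := (0:ℂ)) (r := (M:ℝ)))
      (fun n => by simpa [mem_closedBall, dist_eq_norm] using
        (show ‖r n‖ ≤ (M:ℝ) from hM n))
    have hφtop : Tendsto φ atTop atTop := hφmono.tendsto_atTop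
    -- a is a root of p
    have hpa : p.IsRoot a := by
      have heval : ∀ n, (q (φ n)).eval (r (φ n)) = 0 :=
        fun n => Polynomial.isRoot_of_mem_roots (hr (φ n))
      have hsum : ∀ n, (q (φ n)).eval (r (φ n)) =
          ∑ i ∈ Finset.range (d + 2), (q (φ n)).coeff i * (r (φ n)) ^ i := by
        intro n
        exact Polynomial.eval_eq_sum_range' (by rw [hq2 (φ n)]; omega) _
      have htend : Tendsto (fun n => ∑ i ∈ Finset.range (d + 2),
          (q (φ n)).coeff i * (r (φ n)) ^ i) atTop
          (𝓝 (∑ i ∈ Finset.range (d + 2), p.coeff i * a ^ i)) := by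
        apply tendsto_finset_sum
        intro i _
        exact ((hco i).comp hφtop).mul (hφtend.pow i)
      have : Tendsto (fun n => (q (φ n)).eval (r (φ n))) atTop
          (𝓝 (∑ i ∈ Finset.range (d + 2), p.coeff i * a ^ i)) := by
        simpa only [← hsum] using htend
      have h0 : Tendsto (fun _ : ℕ => (0:ℂ)) atTop
          (𝓝 (∑ i ∈ Finset.range (d + 2), p.coeff i * a ^ i)) := by
        simpa only [heval] using this
      have := tendsto_nhds_unique h0 tendsto_const_nhds
      rw [Polynomial.IsRoot, Polynomial.eval_eq_sum_range' (n := d + 2) (by omega)]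
      exact this.symm ▸ rfl
    -- factor out the root a of p
    set p' := p /ₘ (X - C a) with hp'def
    have hpfac : (X - C a) * p' = p := mul_divByMonic_eq_iff_isRoot.mpr hpa
    have hp'monic : p'.Monic := by
      have h2 : ((X - C a) * p').Monic := by rw [hpfac]; exact hp
      exact (monic_X_sub_C a).of_mul_monic_left h2
    have hp'deg : p'.natDegree = d := by
      have h1 : p.natDegree = (X - C a).natDegree + p'.natDegree := by
        rw [← hpfac]
        exact natDegree_mul (X_sub_C_ne_zero a) hp'monic.ne_zero
      rw [natDegree_X_sub_C, hdeg] at h1; omega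
    have hprootsp : p.roots = a ::ₘ p'.roots := by
      conv_lhs => rw [← hpfac]
      rw [roots_mul (by rw [hpfac]; exact hp.ne_zero), roots_X_sub_C,
        ← Multiset.singleton_add]
    -- factor out the roots r n of q n
    set q' : ℕ → ℂ[X] := fun n => q n /ₘ (X - C (r n)) with hq'def
    have hqfac : ∀ n, (X - C (r n)) * q' n = q n := fun n =>
      mul_divByMonic_eq_iff_isRoot.mpr (isRoot_of_mem_roots (hr n))
    have hq'monic : ∀ n, (q' n).Monic := by
      intro n
      have h2 : ((X - C (r n)) * q' n).Monic := by rw [hqfac]; exact hq1 n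
      exact (monic_X_sub_C (r n)).of_mul_monic_left h2
    have hq'deg : ∀ n, (q' n).natDegree = d := by
      intro n
      have h1 : (q n).natDegree = (X - C (r n)).natDegree + (q' n).natDegree := by
        rw [← hqfac n]
        exact natDegree_mul (X_sub_C_ne_zero (r n)) (hq'monic n).ne_zero
      rw [natDegree_X_sub_C, hq2 n] at h1; omega
    have hqroots : ∀ n, (q n).roots = r n ::ₘ (q' n).roots := by
      intro n
      conv_lhs => rw [← hqfac n]
      rw [roots_mul (by rw [hqfac n]; exact (hq1 n).ne_zero), roots_X_sub_C,
        ← Multiset.singleton_add]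
    -- coefficients of q' (φ n) tend to those of p'
    have hco' : ∀ i, Tendsto (fun n => (q' (φ n)).coeff i) atTop (𝓝 (p'.coeff i)) := by
      intro i
      have hQ : ∀ n, (q' (φ n)).coeff i =
          ∑ j ∈ Finset.Icc (i+1) (d+1), (r (φ n)) ^ (j - (i+1)) * (q (φ n)).coeff j := by
        intro n
        have := coeff_divByMonic_X_sub_C (q (φ n)) (r (φ n)) i
        rw [hq2 (φ n)] at this
        simpa [hq'def] using this
      have hP : p'.coeff i =
          ∑ j ∈ Finset.Icc (i+1) (d+1), a ^ (j - (i+1)) * p.coeff j := by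
        have := coeff_divByMonic_X_sub_C p a i
        rw [hdeg] at this
        simpa [hp'def] using this
      rw [hP]
      simp only [hQ]
      apply tendsto_finset_sum
      intro j _
      exact (hφtend.pow _).mul ((hco j).comp hφtop)
    obtain ⟨δ', hδ'pos, hδ'⟩ := ih p' hp'monic hp'deg ε hε
    have hev1 : ∀ᶠ n in atTop, ∀ i, dist ((q' (φ n)).coeff i) (p'.coeff i) ≤ δ' := by
      have hfin : ∀ᶠ n in atTop, ∀ i ∈ Finset.range (d+1),
          dist ((q' (φ n)).coeff i) (p'.coeff i) ≤ δ' := by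
        rw [Filter.eventually_all_finset]
        intro i _
        have := (hco' i).eventually (Metric.closedBall_mem_nhds (p'.coeff i) hδ'pos)
        simpa [Metric.mem_closedBall] using this
      filter_upwards [hfin] with n hn i
      by_cases hi : i ∈ Finset.range (d+1)
      · exact hn i hi
      · have hid : d < i := by simpa using hi
        rw [Polynomial.coeff_eq_zero_of_natDegree_lt (by rw [hq'deg (φ n)]; omega),
          Polynomial.coeff_eq_zero_of_natDegree_lt (by rw [hp'deg]; omega)]
        simpa using hδ'pos.le
    have hev2 : ∀ᶠ n in atTop, dist (r (φ n)) a < ε := by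
      have := hφtend.eventually (Metric.ball_mem_nhds a hε)
      simpa [Metric.mem_ball] using this
    obtain ⟨n, hn1, hn2⟩ := (hev1.and hev2).exists
    refine hq4 (φ n) ?_
    rw [hqroots (φ n), hprootsp]
    exact Multiset.Rel.cons hn2 (hδ' _ (hq'monic _) (hq'deg _) hn1)

lemma roots_rel (P : ℂ[X]) (hP : 0 < P.degree) (z₀ : ℂ) {ε : ℝ} (hε : 0 < ε) :
    ∀ᶠ z in 𝓝 z₀,
      Multiset.Rel (fun a b => dist a b < ε) ((P - C z).roots) ((P - C z₀).roots) := by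
  set c := P.leadingCoeff with hc
  have hc0 : c ≠ 0 := leadingCoeff_ne_zero.mpr (fun h => by simp [h] at hP)
  have hlead : ∀ z : ℂ, (P - C z).leadingCoeff = c := by
    intro z
    exact leadingCoeff_sub_of_degree_lt (lt_of_le_of_lt (degree_C_le) hP)
  set N : ℂ → ℂ[X] := fun z => C c⁻¹ * (P - C z) with hN
  have hroots : ∀ z, (N z).roots = (P - C z).roots := fun z =>
    roots_C_mul _ (inv_ne_zero hc0)
  have hsub0 : ∀ z : ℂ, P - C z ≠ 0 := by
    intro z h
    have h2 := hlead z
    rw [h] at h2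
    simp at h2
    exact hc0 h2.symm
  have hmonic : ∀ z, (N z).Monic := by
    intro z
    have : (N z).leadingCoeff = 1 := by
      rw [hN, leadingCoeff_mul, leadingCoeff_C, hlead z, inv_mul_cancel₀ hc0]
    exact this
  have hdeg : ∀ z, (N z).natDegree = P.natDegree := by
    intro z
    rw [hN, natDegree_C_mul (inv_ne_zero hc0), natDegree_sub_C]
  obtain ⟨δ, hδpos, hδ⟩ := roots_rel_aux P.natDegree (N z₀) (hmonic z₀) (hdeg z₀) ε hε
  have hcoeff : ∀ z i, dist ((N z).coeff i) ((N z₀).coeff i) ≤ ‖c⁻¹‖ * dist z z₀ := by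
    intro z i
    simp only [hN, coeff_C_mul, coeff_sub, coeff_C]
    by_cases hi : i = 0
    · subst hi
      simp only [if_pos]
      rw [dist_eq_norm]
      have h3 : c⁻¹ * (P.coeff 0 - z) - c⁻¹ * (P.coeff 0 - z₀) = c⁻¹ * (z₀ - z) := by ring
      rw [h3, norm_mul, dist_eq_norm, norm_sub_rev]
    · simp only [if_neg hi, sub_zero, dist_self]
      positivity
  have hball : Metric.closedBall z₀ (δ / (‖c⁻¹‖ + 1)) ∈ 𝓝 z₀ :=
    Metric.closedBall_mem_nhds z₀ (by positivity)
  refine Filter.eventually_of_mem hball ?_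
  intro z hz
  rw [Metric.mem_closedBall] at hz
  have hclose : ∀ i, dist ((N z).coeff i) ((N z₀).coeff i) ≤ δ := by
    intro i
    refine (hcoeff z i).trans ?_
    have h1 : (0:ℝ) ≤ ‖c⁻¹‖ := norm_nonneg _
    have h2 : ‖c⁻¹‖ * dist z z₀ ≤ ‖c⁻¹‖ * (δ / (‖c⁻¹‖ + 1)) :=
      mul_le_mul_of_nonneg_left hz h1
    refine h2.trans ?_
    rw [div_eq_mul_inv]
    rw [show ‖c⁻¹‖ * (δ * (‖c⁻¹‖ + 1)⁻¹) = δ * (‖c⁻¹‖ / (‖c⁻¹‖ + 1)) by ring]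
    nlinarith [div_le_one_of_le₀ (by linarith : ‖c⁻¹‖ ≤ ‖c⁻¹‖ + 1) (by positivity),
      div_nonneg h1 (by positivity : (0:ℝ) ≤ ‖c⁻¹‖ + 1)]
  have := hδ (N z) (hmonic z) (hdeg z) hclose
  rwa [hroots z, hroots z₀] at this

open Classical in
lemma card_filter_le_of_rel (T : Set ℂ) {r s : Multiset ℂ}
    (h : Multiset.Rel (fun a b => a ∈ T → b ∈ T) r s) :
    Multiset.card (Multiset.filter (· ∈ T) r) ≤
      Multiset.card (Multiset.filter (· ∈ T) s) := by
  induction h with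
  | zero => simp
  | @cons a b as bs hab h ih =>
    by_cases ha : a ∈ T
    · rw [Multiset.filter_cons_of_pos _ ha, Multiset.filter_cons_of_pos _ (hab ha)]
      simpa using ih
    · rw [Multiset.filter_cons_of_neg _ ha]
      refine le_trans ih ?_
      by_cases hb : b ∈ T
      · rw [Multiset.filter_cons_of_pos _ hb]
        simp
      · rw [Multiset.filter_cons_of_neg _ hb]


lemma uniform_ball {S V : Set ℂ} (hS : S.Finite) (hV : IsOpen V) (hSV : S ⊆ V) :
    ∃ ε > 0, ∀ r ∈ S, ball r ε ⊆ V := by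
  have hd : Disjoint S Vᶜ := Set.disjoint_left.mpr fun a haS haVc => haVc (hSV haS)
  obtain ⟨δ, hδ, hdisj⟩ := hd.exists_thickenings hS.isCompact hV.isClosed_compl
  refine ⟨δ, hδ, fun r hr y hy => ?_⟩
  by_contra hyV
  have h1 : y ∈ Metric.thickening δ S :=
    Metric.mem_thickening_iff.mpr ⟨r, hr, Metric.mem_ball.mp hy⟩
  have h2 : y ∈ Metric.thickening δ Vᶜ := Metric.self_subset_thickening hδ _ hyV
  exact Set.disjoint_left.mp hdisj h1 h2

open Classical in
lemma card_filter_eq_of_rel (D : Set ℂ) {r s : Multiset ℂ}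
    (h : Multiset.Rel (fun a b => (a ∈ D ↔ b ∈ D)) r s) :
    Multiset.card (Multiset.filter (· ∈ D) r) =
      Multiset.card (Multiset.filter (· ∈ D) s) :=
  le_antisymm (card_filter_le_of_rel D (h.mono fun a _ b _ hab => hab.mp))
    (card_filter_le_of_rel D ((Multiset.rel_flip.mpr h).mono fun a _ b _ hab => hab.mpr))

lemma nuT_eq_of_rel {P : ℂ[X]} {D : Set ℂ} {z z₀ : ℂ}
    (h : Multiset.Rel (fun a b => (a ∈ D ↔ b ∈ D)) ((P - C z).roots) ((P - C z₀).roots)) :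
    nuT P D z = nuT P D z₀ :=
  card_filter_eq_of_rel D h


lemma roots_finite (P : ℂ[X]) (hP : 0 < P.degree) (z : ℂ) :
    {r : ℂ | r ∈ (P - C z).roots}.Finite := by
  have : {r : ℂ | r ∈ (P - C z).roots} ⊆ ((P - C z).roots.toFinset : Set ℂ) := by
    intro r hr
    simpa [Multiset.mem_toFinset] using hr
  exact Set.Finite.subset (Set.finite_coe_iff.mp (FinsetCoe.fintype _).finite) this

/-- Direction (2) ⇒ (1): local constancy of `ν_T` on `P(T)`. -/
lemma nuT_eventually_const (P : ℂ[X]) (hP : 0 < P.degree) {T : Set ℂ}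
    (hTc : IsClosed T) {U : Set ℂ} (hU : IsOpen U) (hTU : T ⊆ U)
    (hav : ∀ w ∈ U \ T, P.eval w ∉ (fun w => P.eval w) '' T) {z₀ : ℂ}
    (hz₀ : z₀ ∈ (fun w => P.eval w) '' T) :
    ∀ᶠ z in 𝓝 z₀, z ∈ (fun w => P.eval w) '' T → nuT P T z = nuT P T z₀ := by
  set Q := (fun w => P.eval w) '' T with hQ
  have hfin := roots_finite P hP z₀
  obtain ⟨ε₁, hε₁, hb₁⟩ := uniform_ball (V := U) (hfin.inter_of_left T)
    hU (fun r hr => hTU hr.2)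
  obtain ⟨ε₂, hε₂, hb₂⟩ := uniform_ball (V := Tᶜ) (hfin.inter_of_left Tᶜ)
    hTc.isOpen_compl (fun r hr => hr.2)
  have hεpos : 0 < min ε₁ ε₂ := lt_min hε₁ hε₂
  filter_upwards [roots_rel P hP z₀ hεpos] with z hrel hzQ
  refine nuT_eq_of_rel (hrel.mono ?_)
  intro a ha b hb hab
  have hbroot : b ∈ {r : ℂ | r ∈ (P - C z₀).roots} := hb
  have haeval : P.eval a = z := (mem_roots_sub_C hP).mp ha
  have hamem : a ∈ ball b (min ε₁ ε₂) := Metric.mem_ball.mpr hab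
  constructor
  · intro haT
    by_contra hbT
    have : a ∈ Tᶜ := hb₂ b ⟨hbroot, hbT⟩
      (Metric.mem_ball.mpr (lt_of_lt_of_le hab (min_le_right _ _)))
    exact this haT
  · intro hbT
    have haU : a ∈ U := hb₁ b ⟨hbroot, hbT⟩
      (Metric.mem_ball.mpr (lt_of_lt_of_le hab (min_le_left _ _)))
    by_contra haT
    exact hav a ⟨haU, haT⟩ (haeval ▸ hzQ)

lemma nuT_continuousOn (P : ℂ[X]) (hP : 0 < P.degree) {T : Set ℂ}
    (hTc : IsClosed T) {U : Set ℂ} (hU : IsOpen U) (hTU : T ⊆ U)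
    (hav : ∀ w ∈ U \ T, P.eval w ∉ (fun w => P.eval w) '' T) :
    ContinuousOn (fun z => (nuT P T z : ℝ)) ((fun w => P.eval w) '' T) := by
  intro z₀ hz₀
  have hev := nuT_eventually_const P hP hTc hU hTU hav hz₀
  have hev' : ∀ᶠ z in 𝓝[(fun w => P.eval w) '' T] z₀,
      (fun z => (nuT P T z : ℝ)) z = (nuT P T z₀ : ℝ) := by
    rw [eventually_nhdsWithin_iff]
    filter_upwards [hev] with z hz hzQ
    simp only [hz hzQ]
  unfold ContinuousWithinAt
  exact Tendsto.congr' (hev'.mono fun z h => h.symm) tendsto_const_nhds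


lemma exists_nbhd_of_continuousOn (P : ℂ[X]) (hP : 0 < P.degree) {T : Set ℂ}
    (hT : IsCompact T)
    (hcont : ContinuousOn (fun z => (nuT P T z : ℝ)) ((fun w => P.eval w) '' T)) :
    ∃ U : Set ℂ, IsOpen U ∧ T ⊆ U ∧
      ∀ z ∈ U \ T, P.eval z ∉ (fun w => P.eval w) '' T := by
  classical
  set Q := (fun w => P.eval w) '' T with hQdef
  by_contra hne
  push_neg at hne
  have hthick : ∀ n : ℕ, ∃ z, (z ∈ Metric.thickening (1/((n:ℝ)+1)) T \ T) ∧ P.eval z ∈ Q := by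
    intro n
    obtain ⟨z, hz1, hz2⟩ := hne (Metric.thickening (1/((n:ℝ)+1)) T)
      (Metric.isOpen_thickening) (Metric.self_subset_thickening (by positivity) T)
    exact ⟨z, hz1, hz2⟩
  choose w hw hwQ using hthick
  have hwT : ∀ n, w n ∉ T := fun n => (hw n).2
  have hsel : ∀ n, ∃ t ∈ T, dist (w n) t < 1/((n:ℝ)+1) := fun n =>
    Metric.mem_thickening_iff.mp (hw n).1
  choose t ht htd using hsel
  obtain ⟨x, hxT, φ, hφmono, hφt⟩ := hT.tendsto_subseq ht
  have hφtop := hφmono.tendsto_atTop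
  have hwx : Tendsto (fun n => w (φ n)) atTop (𝓝 x) := by
    rw [tendsto_iff_dist_tendsto_zero]
    apply squeeze_zero (fun n => dist_nonneg)
      (g := fun n => 1/((φ n : ℝ)+1) + dist (t (φ n)) x)
    · intro n
      calc dist (w (φ n)) x ≤ dist (w (φ n)) (t (φ n)) + dist (t (φ n)) x :=
            dist_triangle _ _ _
        _ ≤ _ := by have := (htd (φ n)).le; gcongr
    · have h1 : Tendsto (fun n => 1/((φ n:ℝ)+1)) atTop (𝓝 0) :=
        tendsto_one_div_add_atTop_nhds_zero_nat.comp hφtop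
      have h2 : Tendsto (fun n => dist (t (φ n)) x) atTop (𝓝 0) :=
        tendsto_iff_dist_tendsto_zero.mp hφt
      simpa using h1.add h2
  set z₀ := P.eval x with hz₀def
  have hz₀Q : z₀ ∈ Q := ⟨x, hxT, rfl⟩
  have hzseq : Tendsto (fun n => P.eval (w (φ n))) atTop (𝓝 z₀) :=
    ((P.continuous_aeval).tendsto x).comp hwx
  have hfin := roots_finite P hP z₀
  obtain ⟨ε₂, hε₂, hb₂⟩ := uniform_ball (hfin.inter_of_left Tᶜ)
    hT.isClosed.isOpen_compl (fun r hr => hr.2)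
  obtain ⟨ρ, hρ, hbρ⟩ : ∃ ρ > 0, ∀ b ∈ {r : ℂ | r ∈ (P - C z₀).roots},
      dist b x < ρ → b = x := by
    have hS : ({r : ℂ | r ∈ (P - C z₀).roots} \ {x}).Finite := hfin.diff
    have hxS : x ∈ ({r : ℂ | r ∈ (P - C z₀).roots} \ {x})ᶜ := fun h => h.2 rfl
    obtain ⟨ρ, hρ, hball⟩ := Metric.isOpen_iff.mp hS.isClosed.isOpen_compl x hxS
    refine ⟨ρ, hρ, fun b hb hdist => ?_⟩
    by_contra hbx
    exact hball (Metric.mem_ball.mpr hdist) ⟨hb, hbx⟩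
  set ε := min ε₂ (ρ/2) with hεdef
  have hεpos : 0 < ε := lt_min hε₂ (by positivity)
  have hxroot : x ∈ (P - C z₀).roots := (mem_roots_sub_C hP).mpr rfl
  have hev1 := hzseq.eventually (roots_rel P hP z₀ hεpos)
  have hev2 : ∀ᶠ n in atTop, w (φ n) ∈ Metric.ball x ε :=
    hwx.eventually_mem (Metric.ball_mem_nhds x hεpos)
  have hkey : ∀ᶠ n in atTop,
      nuT P T (P.eval (w (φ n))) + 1 ≤ nuT P T z₀ := by
    filter_upwards [hev1, hev2] with n hrel hwb
    set z := P.eval (w (φ n)) with hzdef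
    have hwroot : w (φ n) ∈ (P - C z).roots := (mem_roots_sub_C hP).mpr rfl
    have hrel' : Multiset.Rel (fun a b => dist a b < ε)
        (w (φ n) ::ₘ ((P - C z).roots.erase (w (φ n)))) ((P - C z₀).roots) := by
      rw [Multiset.cons_erase hwroot]; exact hrel
    obtain ⟨b, t', hab, hrest, ht'⟩ := Multiset.rel_cons_left.mp hrel'
    have hbmem : b ∈ (P - C z₀).roots := ht' ▸ Multiset.mem_cons_self b t'
    have hbx : b = x := by
      refine hbρ b hbmem ?_
      have h1 : dist b (w (φ n)) < ε := by rw [dist_comm]; exact hab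
      have h2 : dist (w (φ n)) x < ε := Metric.mem_ball.mp hwb
      calc dist b x ≤ dist b (w (φ n)) + dist (w (φ n)) x := dist_triangle _ _ _
        _ < ε + ε := add_lt_add h1 h2
        _ ≤ ρ/2 + ρ/2 := add_le_add (min_le_right _ _) (min_le_right _ _)
        _ = ρ := by ring
    have h1 : nuT P T z =
        Multiset.card (Multiset.filter (· ∈ T) ((P - C z).roots.erase (w (φ n)))) := by
      show Multiset.card (Multiset.filter (· ∈ T) ((P - C z).roots)) = _
      conv_lhs => rw [← Multiset.cons_erase hwroot]
      rw [Multiset.filter_cons_of_neg _ (hwT (φ n))]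
    have h2 : Multiset.card (Multiset.filter (· ∈ T) ((P - C z).roots.erase (w (φ n))))
        ≤ Multiset.card (Multiset.filter (· ∈ T) t') := by
      refine card_filter_le_of_rel T (hrest.mono ?_)
      intro a ha b' hb' hab' haT
      by_contra hb'T
      have hb'root : b' ∈ {r : ℂ | r ∈ (P - C z₀).roots} :=
        ht' ▸ Multiset.mem_cons_of_mem hb'
      have : a ∈ Tᶜ := hb₂ b' ⟨hb'root, hb'T⟩
        (Metric.mem_ball.mpr (lt_of_lt_of_le hab' (min_le_left _ _)))
      exact this haT
    have h3 : nuT P T z₀ = Multiset.card (Multiset.filter (· ∈ T) t') + 1 := by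
      show Multiset.card (Multiset.filter (· ∈ T) ((P - C z₀).roots)) = _
      rw [ht', hbx, Multiset.filter_cons_of_pos _ hxT]
      simp
    omega
  have htendwithin : Tendsto (fun n => P.eval (w (φ n))) atTop (𝓝[Q] z₀) :=
    tendsto_nhdsWithin_of_tendsto_nhds_of_eventually_within _ hzseq
      (Eventually.of_forall fun n => hwQ (φ n))
  have hlim : Tendsto (fun n => (nuT P T (P.eval (w (φ n))) : ℝ)) atTop
      (𝓝 (nuT P T z₀)) := ((hcont z₀ hz₀Q).tendsto).comp htendwithin
  have hle : (nuT P T z₀ : ℝ) ≤ (nuT P T z₀ : ℝ) - 1 := by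
    refine le_of_tendsto hlim ?_
    filter_upwards [hkey] with n hn
    have : ((nuT P T (P.eval (w (φ n))) : ℝ) + 1) ≤ (nuT P T z₀ : ℝ) := by
      exact_mod_cast hn
    linarith
  linarith


/-- Direction (2) ⇒ (3). -/
lemma comp_of_nbhd (P : ℂ[X]) {T : Set ℂ} (hTcl : IsClosed T) (hconn : IsConnected T)
    {U : Set ℂ} (hU : IsOpen U) (hTU : T ⊆ U)
    (hav : ∀ z ∈ U \ T, P.eval z ∉ (fun w => P.eval w) '' T) :
    ∃ x ∈ T, T = connectedComponentIn
      ((fun w => P.eval w) ⁻¹' ((fun w => P.eval w) '' T)) x := by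
  obtain ⟨x, hxT⟩ := hconn.nonempty
  set K := (fun w => P.eval w) ⁻¹' ((fun w => P.eval w) '' T) with hK
  have hTK : T ⊆ K := fun t ht => ⟨t, ht, rfl⟩
  set C := connectedComponentIn K x with hC
  have hTC : T ⊆ C := hconn.isPreconnected.subset_connectedComponentIn hxT hTK
  have hCK : C ⊆ K := connectedComponentIn_subset _ _
  have hCU : C ∩ U ⊆ T := by
    rintro c ⟨hcC, hcU⟩
    by_contra hcT
    exact hav c ⟨hcU, hcT⟩ (hCK hcC)
  have hCpre : IsPreconnected C := isPreconnected_connectedComponentIn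
  have hcover : C ⊆ U ∪ Tᶜ := by
    intro c hc
    by_cases hcT : c ∈ T
    · exact Or.inl (hTU hcT)
    · exact Or.inr hcT
  have hCT : C ⊆ T := by
    by_contra hCT
    obtain ⟨c, hcC, hcT⟩ : ∃ c, c ∈ C ∧ c ∉ T := by
      simpa [Set.subset_def] using hCT
    obtain ⟨y, hyC, hyU, hyT⟩ := hCpre U Tᶜ hU hTcl.isOpen_compl hcover
      ⟨x, hTC hxT, hTU hxT⟩ ⟨c, hcC, hcT⟩
    exact hyT (hCU ⟨hyC, hyU⟩)
  exact ⟨x, hxT, Set.Subset.antisymm hTC hCT⟩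


lemma K_compact (P : ℂ[X]) (hP : 0 < P.degree) {T : Set ℂ} (hT : IsCompact T) :
    IsCompact ((fun w => P.eval w) ⁻¹' ((fun w => P.eval w) '' T)) := by
  set Q := (fun w => P.eval w) '' T with hQ
  have hQcpt : IsCompact Q := hT.image (P.continuous_aeval)
  have hKcl : IsClosed ((fun w => P.eval w) ⁻¹' Q) :=
    hQcpt.isClosed.preimage (P.continuous_aeval)
  obtain ⟨R, hR⟩ : ∃ R, ∀ q ∈ Q, ‖q‖ ≤ R :=
    isBounded_iff_forall_norm_le.mp hQcpt.isBounded
  have htend : Tendsto (fun z : ℂ => ‖P.eval z‖) (Bornology.cobounded ℂ) atTop :=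
    P.tendsto_norm_atTop hP tendsto_norm_cobounded_atTop
  have hev : ∀ᶠ z in Bornology.cobounded ℂ, R < ‖P.eval z‖ := htend.eventually_gt_atTop R
  have hbd : Bornology.IsBounded {z : ℂ | R < ‖P.eval z‖}ᶜ := by
    rw [Bornology.isBounded_compl_iff, Bornology.isCobounded_def]
    exact hev
  have hsub : (fun w => P.eval w) ⁻¹' Q ⊆ {z : ℂ | R < ‖P.eval z‖}ᶜ := by
    intro z hz
    simp only [Set.mem_compl_iff, Set.mem_setOf_eq, not_lt]
    exact hR _ hz
  exact Metric.isCompact_of_isClosed_isBounded hKcl (hbd.subset hsub)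

/-- Every relatively clopen nonempty subset of `K = P⁻¹(P(T))` surjects onto `P(T)`. -/
lemma clopen_surj (P : ℂ[X]) (hP : 0 < P.degree) {T : Set ℂ} (hT : IsCompact T)
    (hconn : IsConnected T) {V : Set ℂ}
    (hVK : V ⊆ (fun w => P.eval w) ⁻¹' ((fun w => P.eval w) '' T))
    (hVc : IsCompact V)
    (hKVc : IsCompact (((fun w => P.eval w) ⁻¹' ((fun w => P.eval w) '' T)) \ V))
    (hVne : V.Nonempty) :
    ∀ z ∈ (fun w => P.eval w) '' T, ∃ w ∈ V, P.eval w = z := by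
  classical
  set Q := (fun w => P.eval w) '' T with hQ
  set K := (fun w => P.eval w) ⁻¹' Q with hKdef
  have hdisjVW : Disjoint V (K \ V) := Set.disjoint_left.mpr fun a ha ha' => ha'.2 ha
  obtain ⟨δ, hδ, hdisj⟩ := hdisjVW.exists_thickenings hVc hKVc.isClosed
  set U := Metric.thickening (δ/2) V with hUdef
  have hUopen : IsOpen U := Metric.isOpen_thickening
  have hVU : V ⊆ U := Metric.self_subset_thickening (by linarith) V
  have hUK : closure U ∩ K ⊆ V := by
    rintro y ⟨hyc, hyK⟩
    have h1 : y ∈ Metric.cthickening (δ/2) V :=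
      Metric.closure_thickening_subset_cthickening _ _ hyc
    have h2 : y ∈ Metric.thickening δ V :=
      Metric.cthickening_subset_thickening' hδ (by linarith) V h1
    by_contra hyV
    exact Set.disjoint_left.mp hdisj h2 (Metric.self_subset_thickening hδ _ ⟨hyK, hyV⟩)
  have hsep : ∀ r ∈ K, r ∉ U → ∀ y ∈ Metric.ball r (δ/2), y ∉ U := by
    intro r hrK hrU y hy hyU
    have h1 : y ∈ Metric.thickening δ V :=
      Metric.thickening_mono (by linarith) V hyU
    have h2 : y ∈ Metric.thickening δ (K \ V) := by
      refine Metric.mem_thickening_iff.mpr ⟨r, ⟨hrK, fun hrV => hrU (hVU hrV)⟩, ?_⟩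
      have := Metric.mem_ball.mp hy
      linarith
    exact Set.disjoint_left.mp hdisj h1 h2
  set cnt : ℂ → ℕ := fun z =>
    Multiset.card (Multiset.filter (· ∈ U) ((P - C z).roots)) with hcnt
  have hloc : ∀ z₀ ∈ Q, ∀ᶠ z in 𝓝 z₀, z ∈ Q → cnt z = cnt z₀ := by
    intro z₀ hz₀
    obtain ⟨ε₁, hε₁, hb₁⟩ := uniform_ball ((roots_finite P hP z₀).inter_of_left U)
      hUopen (fun r hr => hr.2)
    have hεpos : 0 < min ε₁ (δ/2) := lt_min hε₁ (by linarith)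
    filter_upwards [roots_rel P hP z₀ hεpos] with z hrel hzQ
    refine card_filter_eq_of_rel U (hrel.mono ?_)
    intro a ha b hb hab
    have haK : a ∈ K := by
      have : P.eval a = z := (mem_roots_sub_C hP).mp ha
      simp only [hKdef, Set.mem_preimage, this]; exact hzQ
    have hbroot : b ∈ {r : ℂ | r ∈ (P - C z₀).roots} := hb
    constructor
    · intro haU
      by_contra hbU
      have hbK : b ∈ K := by
        have : P.eval b = z₀ := (mem_roots_sub_C hP).mp hb
        simp only [hKdef, Set.mem_preimage, this]; exact hz₀
      exact hsep b hbK hbU a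
        (Metric.mem_ball.mpr (lt_of_lt_of_le hab (min_le_right _ _))) haU
    · intro hbU
      exact hb₁ b ⟨hbroot, hbU⟩
        (Metric.mem_ball.mpr (lt_of_lt_of_le hab (min_le_left _ _)))
  have hQconn : IsPreconnected Q :=
    (hconn.image _ (P.continuous_aeval).continuousOn).isPreconnected
  have hloc' : ∀ z₀, z₀ ∈ Q → ∃ O : Set ℂ, IsOpen O ∧ z₀ ∈ O ∧
      ∀ z ∈ O, z ∈ Q → cnt z = cnt z₀ := by
    intro z₀ hz₀
    obtain ⟨O, hO1, hO2, hO3⟩ := _root_.eventually_nhds_iff.mp (hloc z₀ hz₀)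
    exact ⟨O, hO2, hO3, hO1⟩
  choose O hOopen hOmem hOconst using hloc'
  set OA := ⋃ (z₀ : ℂ) (h : z₀ ∈ Q ∧ 1 ≤ cnt z₀), O z₀ h.1 with hOA
  set OB := ⋃ (z₀ : ℂ) (h : z₀ ∈ Q ∧ cnt z₀ = 0), O z₀ h.1 with hOB
  have hOAopen : IsOpen OA := isOpen_iUnion fun z₀ => isOpen_iUnion fun h => hOopen _ _
  have hOBopen : IsOpen OB := isOpen_iUnion fun z₀ => isOpen_iUnion fun h => hOopen _ _
  have hcnt_pos : ∀ z ∈ Q, 1 ≤ cnt z := by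
    by_contra hcon
    push_neg at hcon
    obtain ⟨z₂, hz₂Q, hz₂⟩ := hcon
    have hz₂0 : cnt z₂ = 0 := by omega
    obtain ⟨v₀, hv₀⟩ := hVne
    have hv₀K : v₀ ∈ K := hVK hv₀
    have hz₁Q : P.eval v₀ ∈ Q := hv₀K
    have hz₁pos : 1 ≤ cnt (P.eval v₀) := by
      have hroot : v₀ ∈ (P - C (P.eval v₀)).roots := (mem_roots_sub_C hP).mpr rfl
      have : v₀ ∈ Multiset.filter (· ∈ U) ((P - C (P.eval v₀)).roots) :=
        Multiset.mem_filter.mpr ⟨hroot, hVU hv₀⟩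
      have h0 := Multiset.card_pos_iff_exists_mem.mpr ⟨v₀, this⟩
      exact h0
    have hcover : Q ⊆ OA ∪ OB := by
      intro z hz
      by_cases h1 : 1 ≤ cnt z
      · exact Or.inl (Set.mem_iUnion.mpr ⟨z, Set.mem_iUnion.mpr ⟨⟨hz, h1⟩, hOmem _ _⟩⟩)
      · exact Or.inr (Set.mem_iUnion.mpr ⟨z, Set.mem_iUnion.mpr ⟨⟨hz, by omega⟩, hOmem _ _⟩⟩)
    obtain ⟨y, hyQ, hyA, hyB⟩ := hQconn OA OB hOAopen hOBopen hcover
      ⟨P.eval v₀, hz₁Q, Set.mem_iUnion.mpr ⟨P.eval v₀,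
        Set.mem_iUnion.mpr ⟨⟨hz₁Q, hz₁pos⟩, hOmem _ _⟩⟩⟩
      ⟨z₂, hz₂Q, Set.mem_iUnion.mpr ⟨z₂,
        Set.mem_iUnion.mpr ⟨⟨hz₂Q, hz₂0⟩, hOmem _ _⟩⟩⟩
    obtain ⟨a, ha⟩ := Set.mem_iUnion.mp hyA
    obtain ⟨ha', hya⟩ := Set.mem_iUnion.mp ha
    obtain ⟨b, hb⟩ := Set.mem_iUnion.mp hyB
    obtain ⟨hb', hyb⟩ := Set.mem_iUnion.mp hb
    have e1 : cnt y = cnt a := hOconst a ha'.1 y hya hyQ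
    have e2 : cnt y = cnt b := hOconst b hb'.1 y hyb hyQ
    omega
  intro z hz
  have h1 := hcnt_pos z hz
  have h2 : ∃ w, w ∈ Multiset.filter (· ∈ U) ((P - C z).roots) := by
    apply Multiset.card_pos_iff_exists_mem.mp
    exact h1
  obtain ⟨w, hw⟩ := h2
  obtain ⟨hwroot, hwU⟩ := Multiset.mem_filter.mp hw
  have hweval : P.eval w = z := (mem_roots_sub_C hP).mp hwroot
  have hwK : w ∈ K := by
    simp only [hKdef, Set.mem_preimage, hweval]; exact hz
  exact ⟨w, hUK ⟨subset_closure hwU, hwK⟩, hweval⟩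


/-- Direction (3) ⇒ (2). -/
lemma nbhd_of_comp (P : ℂ[X]) (hP : 0 < P.degree) {T : Set ℂ} (hT : IsCompact T)
    (hconn : IsConnected T) {x : ℂ} (hx : x ∈ T)
    (hTC : T = connectedComponentIn
      ((fun w => P.eval w) ⁻¹' ((fun w => P.eval w) '' T)) x) :
    ∃ U : Set ℂ, IsOpen U ∧ T ⊆ U ∧
      ∀ z ∈ U \ T, P.eval z ∉ (fun w => P.eval w) '' T := by
  classical
  set Q := (fun w => P.eval w) '' T with hQdef
  set K := (fun w => P.eval w) ⁻¹' Q with hKdef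
  have hKcpt : IsCompact K := K_compact P hP hT
  haveI : CompactSpace K := isCompact_iff_compactSpace.mp hKcpt
  have hTK : T ⊆ K := fun t ht => ⟨t, ht, rfl⟩
  set z₀ := P.eval x with hz₀def
  have hz₀Q : z₀ ∈ Q := ⟨x, hx, rfl⟩
  -- complement images
  have himg : ∀ s : Set ↥K, Subtype.val '' sᶜ = K \ Subtype.val '' s := by
    intro s
    ext w
    constructor
    · rintro ⟨e, he, rfl⟩
      exact ⟨e.2, fun hmem => by
        obtain ⟨e', he', heq⟩ := hmem
        exact he (by rwa [show e = e' from Subtype.ext heq.symm])⟩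
    · rintro ⟨hwK, hnot⟩
      exact ⟨⟨w, hwK⟩, fun hmem => hnot ⟨⟨w, hwK⟩, hmem, rfl⟩, rfl⟩
  -- closedness of relative components
  have hcompcl : ∀ w ∈ K, IsClosed (connectedComponentIn K w) := by
    intro w hw
    rw [connectedComponentIn_eq_image hw]
    exact ((isClosed_connectedComponent).isCompact.image continuous_subtype_val).isClosed
  -- Step 2 : every relative component of K contains a preimage of z₀
  have hstep2 : ∀ y ∈ K, ∃ e, e ∈ connectedComponentIn K y ∧ P.eval e = z₀ := by
    intro y hy
    set y' : ↥K := ⟨y, hy⟩ with hy'def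
    set E : Set ↥K := {e : ↥K | P.eval ↑e = z₀} with hEdef
    have hEcl : IsClosed E :=
      isClosed_eq ((P.continuous_aeval).comp continuous_subtype_val) continuous_const
    set ι := {s : Set ↥K // IsClopen s ∧ y' ∈ s} with hιdef
    haveI : Nonempty ι := ⟨⟨Set.univ, isClopen_univ, trivial⟩⟩
    set t : ι → Set ↥K := fun s => ↑s ∩ E with htdef
    have hd : Directed (· ⊇ ·) t := by
      intro i j
      refine ⟨⟨i.1 ∩ j.1, i.2.1.inter j.2.1, ⟨i.2.2, j.2.2⟩⟩, ?_, ?_⟩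
      · exact Set.inter_subset_inter_left _ Set.inter_subset_left
      · exact Set.inter_subset_inter_left _ Set.inter_subset_right
    have hn : ∀ i : ι, (t i).Nonempty := by
      intro i
      have hVK : Subtype.val '' i.1 ⊆ K := by
        rintro w ⟨e, _, rfl⟩; exact e.2
      have hVc : IsCompact (Subtype.val '' i.1) :=
        (i.2.1.isClosed.isCompact).image continuous_subtype_val
      have hKVc : IsCompact (K \ Subtype.val '' i.1) := by
        rw [← himg i.1]
        exact (i.2.1.compl.isClosed.isCompact).image continuous_subtype_val
      have hVne : (Subtype.val '' i.1).Nonempty := ⟨↑y', y', i.2.2, rfl⟩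
      obtain ⟨w, hwV, hweval⟩ := clopen_surj P hP hT hconn hVK hVc hKVc hVne z₀ hz₀Q
      obtain ⟨e, he, rfl⟩ := hwV
      exact ⟨e, he, hweval⟩
    have hc : ∀ i : ι, IsCompact (t i) := fun i =>
      (i.2.1.isClosed.inter hEcl).isCompact
    have hcl : ∀ i : ι, IsClosed (t i) := fun i => i.2.1.isClosed.inter hEcl
    obtain ⟨e, he⟩ :=
      IsCompact.nonempty_iInter_of_directed_nonempty_isCompact_isClosed t hd hn hc hcl
    have heE : e ∈ E := (Set.mem_iInter.mp he ⟨Set.univ, isClopen_univ, trivial⟩).2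
    have hecc : e ∈ connectedComponent y' := by
      rw [connectedComponent_eq_iInter_isClopen y']
      exact Set.mem_iInter.mpr fun i => (Set.mem_iInter.mp he i).1
    refine ⟨↑e, ?_, heE⟩
    rw [connectedComponentIn_eq_image hy]
    exact ⟨e, hecc, rfl⟩
  -- Step 3 : finitely many components cover K
  set E₀ : Set ℂ := {w | w ∈ K ∧ P.eval w = z₀} with hE₀def
  have hE₀fin : E₀.Finite := by
    refine (roots_finite P hP z₀).subset ?_
    intro w hw
    exact (mem_roots_sub_C hP).mpr hw.2
  set F := ⋃ w ∈ E₀ \ T, connectedComponentIn K w with hFdef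
  have hcompT : ∀ w ∈ K, w ∈ T → connectedComponentIn K w = T := by
    intro w hwK hwT
    have : w ∈ connectedComponentIn K x := hTC ▸ hwT
    rw [hTC]
    exact (connectedComponentIn_eq this).symm
  have hTF : Disjoint T F := by
    rw [Set.disjoint_left]
    intro y hyT hyF
    obtain ⟨w, hw, hyw⟩ := Set.mem_iUnion₂.mp hyF
    have hwK : w ∈ K := hw.1.1
    have h1 : connectedComponentIn K w = connectedComponentIn K y :=
      connectedComponentIn_eq hyw
    have h2 : connectedComponentIn K y = T := by
      have := hcompT y (hTK hyT) hyT
      have h3 : y ∈ connectedComponentIn K y := mem_connectedComponentIn (hTK hyT)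
      exact this
    have : w ∈ T := by
      rw [← h2, ← h1]
      exact mem_connectedComponentIn hwK
    exact hw.2 this
  have hKT_sub : K \ T ⊆ F := by
    rintro y ⟨hyK, hyT⟩
    obtain ⟨e, hecc, heeval⟩ := hstep2 y hyK
    have heK : e ∈ K := connectedComponentIn_subset _ _ hecc
    have heT : e ∉ T := by
      intro heT
      have h1 : connectedComponentIn K y = connectedComponentIn K e :=
        connectedComponentIn_eq hecc
      have h2 : connectedComponentIn K e = T := hcompT e heK heT
      exact hyT (h2 ▸ h1 ▸ mem_connectedComponentIn hyK)
    refine Set.mem_iUnion₂.mpr ⟨e, ⟨⟨heK, heeval⟩, heT⟩, ?_⟩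
    rw [← connectedComponentIn_eq hecc]
    exact mem_connectedComponentIn hyK
  have hFcl : IsClosed F :=
    Set.Finite.isClosed_biUnion (hE₀fin.diff : (E₀ \ T).Finite) fun w hw => hcompcl w hw.1.1
  obtain ⟨δ, hδ, hdisj⟩ := hTF.exists_thickenings hT hFcl
  refine ⟨Metric.thickening δ T, Metric.isOpen_thickening,
    Metric.self_subset_thickening hδ T, ?_⟩
  rintro z ⟨hzU, hzT⟩ hzQ
  have hzK : z ∈ K := hzQ
  have hzF : z ∈ F := hKT_sub ⟨hzK, hzT⟩
  exact Set.disjoint_left.mp hdisj hzU (Metric.self_subset_thickening hδ F hzF)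

end Helpers

/-- Continuity of `ν_T` on `P(T)` is equivalent to the existence of a neighborhood `U` of
`T` such that no point of `U \ T` maps into `P(T)`; for connected `T`, both are equivalent
to `T` being a connected component of `P⁻¹(P(T))`. -/
theorem stmt_10 (P : Polynomial ℂ) (hP : 0 < P.degree) (T : Set ℂ) (hT : IsCompact T) :
    ((ContinuousOn (fun z => (nuT P T z : ℝ)) ((fun w => P.eval w) '' T)) ↔
      (∃ U : Set ℂ, IsOpen U ∧ T ⊆ U ∧
        ∀ z ∈ U \ T, P.eval z ∉ (fun w => P.eval w) '' T)) ∧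
    (IsConnected T →
      ((ContinuousOn (fun z => (nuT P T z : ℝ)) ((fun w => P.eval w) '' T)) ↔
        (∃ x ∈ T,
          T = connectedComponentIn ((fun w => P.eval w) ⁻¹' ((fun w => P.eval w) '' T)) x))) := by
  constructor
  · constructor
    · intro hcont
      exact exists_nbhd_of_continuousOn P hP hT hcont
    · rintro ⟨U, hU, hTU, hav⟩
      exact nuT_continuousOn P hP hT.isClosed hU hTU hav
  · intro hconn
    constructor
    · intro hcont
      obtain ⟨U, hU, hTU, hav⟩ := exists_nbhd_of_continuousOn P hP hT hcont
      exact comp_of_nbhd P hT.isClosed hconn hU hTU hav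
    · rintro ⟨x, hx, hTC⟩
      obtain ⟨U, hU, hTU, hav⟩ := nbhd_of_comp P hP hT hconn hx hTC
      exact nuT_continuousOn P hP hT.isClosed hU hTU hav
end
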